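/- arXiv:2503.16590 — 9 statements merged into one kernel-verified Lean document; each statement's English description precedes it below -/
import Mathlib

section
/- For any real numbers a, b, μ, t with a < b, the iterated complex integral (1/2) ∫_a^b ( ∫_{−1}^{1} t·exp(i·(μ−y)·t·s) ds ) dy is a real number and equals the oriented integral ∫_{(μ−b)t}^{(μ−a)t} (sin v)/v dv. -/
/-!
With `r = (μ - y) t`, the inner integral is elementary: `∫_{-1}^{1} t e^{irs} ds = 2 t sinc r`,
also at `r = 0`. The substitution `v = (μ - y) t` turns the outer integral into `∫ sinc v dv`,
and `sinc v = sin v / v` away from the null set `{0}`.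
-/

open Real

theorem integral_cexp_I_mul_eq_sinc (r c : ℝ) :
    ∫ s in -c..c, Complex.exp (Complex.I * r * s) = ((2 * c * sinc (r * c) : ℝ) : ℂ) := by
  rcases eq_or_ne r 0 with rfl | hr
  · simp [two_mul]
  rcases eq_or_ne c 0 with rfl | hc
  · simp
  have hIr : Complex.I * r ≠ 0 := mul_ne_zero Complex.I_ne_zero (Complex.ofReal_ne_zero.mpr hr)
  rw [integral_exp_mul_complex hIr, sinc_of_ne_zero (mul_ne_zero hr hc)]
  have h₁ : Complex.I * r * (c : ℝ) = (r * c : ℝ) * Complex.I := by push_cast; ring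
  have h₂ : Complex.I * r * ((-c : ℝ) : ℂ) = (-(r * c : ℝ) : ℂ) * Complex.I := by push_cast; ring
  rw [h₁, h₂, Complex.exp_mul_I, Complex.exp_mul_I, Complex.cos_neg, Complex.sin_neg]
  have hr' : (r : ℂ) ≠ 0 := Complex.ofReal_ne_zero.mpr hr
  have hc' : (c : ℂ) ≠ 0 := Complex.ofReal_ne_zero.mpr hc
  push_cast
  field_simp
  ring

theorem integral_mul_sinc_sub_mul (a b μ t : ℝ) :
    ∫ y in a..b, t * sinc ((μ - y) * t) = ∫ v in (μ - b) * t..(μ - a) * t, sinc v := by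
  rw [intervalIntegral.integral_comp_sub_left (fun y => t * sinc (y * t)) μ,
    intervalIntegral.integral_const_mul, intervalIntegral.mul_integral_comp_mul_right]

theorem integral_sinc_eq_integral_sin_div (c d : ℝ) :
    ∫ v in c..d, sinc v = ∫ v in c..d, sin v / v :=
  intervalIntegral.integral_congr_ae <| by
    filter_upwards [MeasureTheory.Measure.ae_ne MeasureTheory.volume 0] with v hv _
    exact sinc_of_ne_zero hv

theorem iterated_complex_integral_eq_dirichlet_general (a b μ t : ℝ) :
    (1 / 2 : ℂ) * ∫ y in a..b, ∫ s in (-1:ℝ)..(1:ℝ),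
        (t : ℂ) * Complex.exp (Complex.I * ((μ : ℂ) - (y : ℂ)) * (t : ℂ) * (s : ℂ)) =
      ((∫ v in ((μ - b) * t)..((μ - a) * t), Real.sin v / v : ℝ) : ℂ) := by
  have inner (y : ℝ) : ∫ s in (-1:ℝ)..(1:ℝ),
      (t : ℂ) * Complex.exp (Complex.I * ((μ : ℂ) - (y : ℂ)) * (t : ℂ) * (s : ℂ)) =
        ((2 * (t * sinc ((μ - y) * t)) : ℝ) : ℂ) := by
    have h := integral_cexp_I_mul_eq_sinc ((μ - y) * t) 1
    simp only [mul_one, Complex.ofReal_mul, Complex.ofReal_sub, ← mul_assoc] at h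
    rw [intervalIntegral.integral_const_mul, h]
    push_cast
    ring
  simp_rw [inner]
  rw [intervalIntegral.integral_ofReal, intervalIntegral.integral_const_mul,
    integral_mul_sinc_sub_mul, integral_sinc_eq_integral_sin_div]
  push_cast
  ring

/-- For any reals `a < b`, `μ`, `t`, the iterated complex integral
`(1/2) ∫_a^b ( ∫_{−1}^{1} t·exp(i(μ−y)ts) ds ) dy` is a real number and equals the oriented
integral `∫_{(μ−b)t}^{(μ−a)t} (sin v)/v dv`. -/
theorem iterated_complex_integral_eq_dirichlet (a b μ t : ℝ) (hab : a < b) :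
    (1 / 2 : ℂ) * ∫ y in a..b, ∫ s in (-1:ℝ)..(1:ℝ),
        (t : ℂ) * Complex.exp (Complex.I * ((μ : ℂ) - (y : ℂ)) * (t : ℂ) * (s : ℂ)) =
      ((∫ v in ((μ - b) * t)..((μ - a) * t), Real.sin v / v : ℝ) : ℂ) :=
  iterated_complex_integral_eq_dirichlet_general a b μ t
end

section
/- Let −∞ < a₁ < b₁ < ∞ and let f : [a₁, b₁] → ℝ be a function of bounded variation, with total variation ‖f‖_TV on [a₁, b₁] and essential supremum ‖f‖_∞. Then for every real t ≠ 0, |∫_{a₁}^{b₁} f(s)·cos(ts) ds| ≤ 4(‖f‖_TV + ‖f‖_∞)/|t| and |∫_{a₁}^{b₁} f(s)·sin(ts) ds| ≤ 4(‖f‖_TV + ‖f‖_∞)/|t|. -/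
/-!
If `k` is bounded by `1` and antiperiodic, `k (x + c) = -k x` (as are `cos (t ·)` and
`sin (t ·)` with `c = π / t`), then translating by `c` gives `2 ∫ g k = ∫ (g - g (· + c)) k`, so
`|∫ g k| ≤ ‖g - g (· + c)‖₁ / 2`. Take for `g` the extension of `f` by zero. Where `x` and
`x + c` both lie in `[a, b]`, the increment of `f` is dominated by that of the monotone function
`x ↦ Var(f, [a, x])`, whose translation increments integrate to at most `|c| Var(f, [a, b])`;
the two boundary layers of width `|c|` contribute at most `|c| ‖f‖_∞` each. With `|c| = π / |t|`
this gives `π (‖f‖_TV + 2 ‖f‖_∞) / (2 |t|)`.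
-/

open MeasureTheory Set Function Real

section Antiperiodic

variable {G : Type*} [AddGroup G] [MeasurableSpace G] [MeasurableAdd G] {μ : Measure G}
  [μ.IsAddRightInvariant] {g k : G → ℝ} {c : G}

theorem abs_integral_mul_le_of_antiperiodic (hg : Integrable g μ)
    (hk : AEStronglyMeasurable k μ) (hk1 : ∀ x, |k x| ≤ 1) (hanti : Antiperiodic k c) :
    |∫ x, g x * k x ∂μ| ≤ (∫ x, |g x - g (x + c)| ∂μ) / 2 := by
  have hk_bdd : ∀ᵐ x ∂μ, ‖k x‖ ≤ 1 := .of_forall hk1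
  have hgc : Integrable (fun x => g (x + c)) μ := hg.comp_add_right c
  have hshift : ∫ x, g (x + c) * k x ∂μ = -∫ x, g x * k x ∂μ := by
    rw [← integral_add_right_eq_self (fun x => g x * k x) c]
    simp only [hanti _, mul_neg, integral_neg, neg_neg]
  have htwice : 2 * ∫ x, g x * k x ∂μ = ∫ x, (g x - g (x + c)) * k x ∂μ := by
    simp only [sub_mul]
    rw [integral_sub (hg.mul_bdd hk hk_bdd) (hgc.mul_bdd hk hk_bdd), hshift]
    ring
  have hle : |∫ x, (g x - g (x + c)) * k x ∂μ| ≤ ∫ x, |g x - g (x + c)| ∂μ := by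
    refine norm_integral_le_of_norm_le (f := fun x => (g x - g (x + c)) * k x) (hg.sub hgc).abs
      (.of_forall fun x => ?_)
    rw [Real.norm_eq_abs, abs_mul]
    exact mul_le_of_le_one_right (abs_nonneg _) (hk1 x)
  rw [← htwice, abs_mul, abs_two] at hle
  linarith

end Antiperiodic

section Variation

variable {α E : Type*} [LinearOrder α] [PseudoEMetricSpace E] {f : α → E} {s : Set α} {a b : α}

theorem BoundedVariationOn.monotoneOn_variationOnFromTo (hf : BoundedVariationOn f s) :
    MonotoneOn (variationOnFromTo f s a) (Ici a) := by
  intro x hx y hy hxy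
  rw [variationOnFromTo.eq_of_le f s hx, variationOnFromTo.eq_of_le f s hy]
  exact ENNReal.toReal_mono (hf.mono inter_subset_left)
    (eVariationOn.mono f (inter_subset_inter_right s (Icc_subset_Icc_right hxy)))

theorem variationOnFromTo_eq_of_subset_Icc (hab : a ≤ b) (hs : s ⊆ Icc a b) :
    variationOnFromTo f s a b = (eVariationOn f s).toReal := by
  rw [variationOnFromTo.eq_of_le f s hab, inter_eq_left.2 hs]

end Variation

theorem LocallyBoundedVariationOn.integrableOn_of_isCompact {μ : Measure ℝ}
    [IsFiniteMeasureOnCompacts μ] {f : ℝ → ℝ} {s : Set ℝ} (hf : LocallyBoundedVariationOn f s)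
    (hs : IsCompact s) : IntegrableOn f s μ := by
  obtain ⟨p, q, hp, hq, rfl⟩ := hf.exists_monotoneOn_sub_monotoneOn
  exact (hp.integrableOn_isCompact hs).sub (hq.integrableOn_isCompact hs)

section ShiftEstimate

variable {f : ℝ → ℝ} {a b M δ : ℝ}

theorem abs_indicator_sub_indicator_add_le {w : ℝ → ℝ} {x : ℝ} (hδ : 0 ≤ δ) (hM0 : 0 ≤ M)
    (hfx : x ∈ Icc a b → |f x| ≤ M) (hfxδ : x + δ ∈ Icc a b → |f (x + δ)| ≤ M)
    (hw : x ∈ Icc a b → x + δ ∈ Icc a b → |f (x + δ) - f x| ≤ w (x + δ) - w x)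
    (hw0 : x ∈ Icc a b → 0 ≤ w (x + δ) - w x) :
    |(Icc a b).indicator f x - (Icc a b).indicator f (x + δ)| ≤
      (Icc a b).indicator (fun y => w (y + δ) - w y) x +
        (Ioc (b - δ) b).indicator (fun _ => M) x + (Ico (a - δ) a).indicator (fun _ => M) x := by
  simp only [indicator_apply, mem_Icc, mem_Ioc, mem_Ico] at *
  split_ifs <;> grind [abs_sub_comm]

theorem MonotoneOn.setIntegral_comp_add_right_sub_le {w : ℝ → ℝ} (hw : MonotoneOn w (Ici a))
    (hab : a ≤ b) (hδ : 0 ≤ δ) :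
    ∫ x in Icc a b, (w (x + δ) - w x) ≤ δ * (w (b + δ) - w a) := by
  have hslope : ∀ x, w (x + δ) - w x = δ * slope w x (x + δ) := fun x => by
    simpa using (sub_smul_slope w x (x + δ)).symm
  rw [integral_Icc_eq_integral_Ioc, ← intervalIntegral.integral_of_le hab]
  simp only [hslope, intervalIntegral.integral_const_mul]
  exact mul_le_mul_of_nonneg_left
    ((hw.mono Icc_subset_Ici_self).intervalIntegral_slope_le hab hδ) hδ

theorem BoundedVariationOn.ae_abs_indicator_sub_indicator_add_le (hab : a ≤ b)
    (hf : BoundedVariationOn f (Icc a b)) (hM : ∀ᵐ x ∂volume.restrict (Icc a b), |f x| ≤ M)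
    (hM0 : 0 ≤ M) (hδ : 0 ≤ δ) :
    ∀ᵐ x, |(Icc a b).indicator f x - (Icc a b).indicator f (x + δ)| ≤
      (Icc a b).indicator (fun y => variationOnFromTo f (Icc a b) a (y + δ) -
          variationOnFromTo f (Icc a b) a y) x +
        (Ioc (b - δ) b).indicator (fun _ => M) x + (Ico (a - δ) a).indicator (fun _ => M) x := by
  have hfM : ∀ᵐ x, x ∈ Icc a b → |f x| ≤ M := (ae_restrict_iff' measurableSet_Icc).1 hM
  have hfMδ : ∀ᵐ x, x + δ ∈ Icc a b → |f (x + δ)| ≤ M :=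
    (measurePreserving_add_right volume δ).quasiMeasurePreserving.tendsto_ae hfM
  filter_upwards [hfM, hfMδ] with x hx hxδ
  have hδx : x ≤ x + δ := le_add_of_nonneg_right hδ
  exact abs_indicator_sub_indicator_add_le hδ hM0 hx hxδ
    (fun hx hxδ => variationOnFromTo.abs_sub_le_sub_of_le hf.locallyBoundedVariationOn
      (left_mem_Icc.2 hab) hx hxδ hδx)
    (fun hx => sub_nonneg.2 (hf.monotoneOn_variationOnFromTo hx.1 (hx.1.trans hδx) hδx))

theorem BoundedVariationOn.integral_abs_indicator_sub_indicator_add_le_of_nonneg (hab : a ≤ b)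
    (hf : BoundedVariationOn f (Icc a b)) (hM : ∀ᵐ x ∂volume.restrict (Icc a b), |f x| ≤ M)
    (hM0 : 0 ≤ M) (hδ : 0 ≤ δ) :
    ∫ x, |(Icc a b).indicator f x - (Icc a b).indicator f (x + δ)| ≤
      δ * ((eVariationOn f (Icc a b)).toReal + 2 * M) := by
  set S := Icc a b
  set w := variationOnFromTo f S a
  have hw : MonotoneOn w (Ici a) := hf.monotoneOn_variationOnFromTo
  have hG : Integrable (S.indicator f) :=
    (hf.locallyBoundedVariationOn.integrableOn_of_isCompact isCompact_Icc).integrable_indicator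
      measurableSet_Icc
  have hwδ : MonotoneOn (fun x => w (x + δ)) S := fun x hx y hy hxy =>
    hw (le_add_of_le_of_nonneg hx.1 hδ) (le_add_of_le_of_nonneg hy.1 hδ) (by linarith)
  have hwS : IntegrableOn (fun x => w (x + δ) - w x) S :=
    (hwδ.integrableOn_isCompact isCompact_Icc).sub
      ((hw.mono Icc_subset_Ici_self).integrableOn_isCompact isCompact_Icc)
  have hΦ₁ : Integrable (S.indicator fun y => w (y + δ) - w y) :=
    hwS.integrable_indicator measurableSet_Icc
  have hΦ₂ : Integrable ((Ioc (b - δ) b).indicator fun _ => M) :=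
    (integrableOn_const measure_Ioc_lt_top.ne).integrable_indicator measurableSet_Ioc
  have hΦ₃ : Integrable ((Ico (a - δ) a).indicator fun _ => M) :=
    (integrableOn_const measure_Ico_lt_top.ne).integrable_indicator measurableSet_Ico
  calc ∫ x, |S.indicator f x - S.indicator f (x + δ)|
      ≤ ∫ x, (S.indicator (fun y => w (y + δ) - w y) x +
          (Ioc (b - δ) b).indicator (fun _ => M) x + (Ico (a - δ) a).indicator (fun _ => M) x) :=
        integral_mono_ae (hG.sub (hG.comp_add_right δ)).abs ((hΦ₁.add hΦ₂).add hΦ₃)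
          (hf.ae_abs_indicator_sub_indicator_add_le hab hM hM0 hδ)
    _ = (∫ x in S, (w (x + δ) - w x)) + δ * M + δ * M := by
        rw [integral_add (by exact hΦ₁.add hΦ₂) hΦ₃, integral_add hΦ₁ hΦ₂,
          integral_indicator measurableSet_Icc, integral_indicator_const _ measurableSet_Ioc,
          integral_indicator_const _ measurableSet_Ico, Real.volume_real_Ioc_of_le (by linarith),
          Real.volume_real_Ico_of_le (by linarith)]
        simp [S, mul_comm]
    _ ≤ δ * (w (b + δ) - w a) + δ * M + δ * M := by
        linarith [hw.setIntegral_comp_add_right_sub_le hab hδ]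
    _ = δ * ((eVariationOn f S).toReal + 2 * M) := by
        have hwb : w (b + δ) = (eVariationOn f S).toReal := variationOnFromTo_eq_of_subset_Icc
          (le_add_of_le_of_nonneg hab hδ) (Icc_subset_Icc_right (le_add_of_nonneg_right hδ))
        have hwa : w a = 0 := variationOnFromTo.self f S a
        rw [hwb, hwa]
        ring

theorem BoundedVariationOn.integral_abs_indicator_sub_indicator_add_le (hab : a ≤ b)
    (hf : BoundedVariationOn f (Icc a b)) (hM : ∀ᵐ x ∂volume.restrict (Icc a b), |f x| ≤ M)
    (hM0 : 0 ≤ M) (δ : ℝ) :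
    ∫ x, |(Icc a b).indicator f x - (Icc a b).indicator f (x + δ)| ≤
      |δ| * ((eVariationOn f (Icc a b)).toReal + 2 * M) := by
  rcases le_total 0 δ with hδ | hδ
  · rw [abs_of_nonneg hδ]
    exact hf.integral_abs_indicator_sub_indicator_add_le_of_nonneg hab hM hM0 hδ
  · have := hf.integral_abs_indicator_sub_indicator_add_le_of_nonneg hab hM hM0 (neg_nonneg.2 hδ)
    rw [abs_of_nonpos hδ, ← integral_add_right_eq_self _ (-δ)]
    simpa only [neg_add_cancel_right, abs_sub_comm] using this

theorem BoundedVariationOn.abs_setIntegral_mul_le_of_antiperiodic (hab : a ≤ b)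
    (hf : BoundedVariationOn f (Icc a b)) (hM : ∀ᵐ x ∂volume.restrict (Icc a b), |f x| ≤ M)
    (hM0 : 0 ≤ M) {k : ℝ → ℝ} {c : ℝ} (hk : AEStronglyMeasurable k) (hk1 : ∀ x, |k x| ≤ 1)
    (hanti : Antiperiodic k c) :
    |∫ x in Icc a b, f x * k x| ≤ |c| * ((eVariationOn f (Icc a b)).toReal + 2 * M) / 2 := by
  have hG : Integrable ((Icc a b).indicator f) :=
    (hf.locallyBoundedVariationOn.integrableOn_of_isCompact isCompact_Icc).integrable_indicator
      measurableSet_Icc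
  rw [← integral_indicator measurableSet_Icc]
  simp only [indicator_mul_left]
  grw [abs_integral_mul_le_of_antiperiodic hG hk hk1 hanti,
    hf.integral_abs_indicator_sub_indicator_add_le hab hM hM0 c]

end ShiftEstimate

theorem BoundedVariationOn.ae_abs_le_essSup {α : Type*} [LinearOrder α] [MeasurableSpace α]
    {μ : Measure α} {f : α → ℝ} {s : Set α} (hf : BoundedVariationOn f s) (hs : MeasurableSet s) :
    ∀ᵐ x ∂μ.restrict s, |f x| ≤ essSup (fun x => |f x|) (μ.restrict s) := by
  rcases s.eq_empty_or_nonempty with rfl | ⟨a, ha⟩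
  · simp
  refine ae_le_essSup ⟨|f a| + (eVariationOn f s).toReal, ?_⟩
  rw [Filter.eventually_map]
  filter_upwards [ae_restrict_mem hs] with x hx
  have := hf.dist_le hx ha
  rw [Real.dist_eq] at this
  linarith [abs_sub_abs_le_abs_sub (f x) (f a)]

/-- Quantitative Riemann–Lebesgue lemma for functions of bounded variation: if
`f : [a₁, b₁] → ℝ` is of bounded variation with total variation `‖f‖_TV` and essential
supremum `‖f‖_∞`, then for every `t ≠ 0`,
`|∫ f(s) cos(ts) ds| ≤ 4(‖f‖_TV + ‖f‖_∞)/|t|` and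
`|∫ f(s) sin(ts) ds| ≤ 4(‖f‖_TV + ‖f‖_∞)/|t|`. -/
theorem riemann_lebesgue_bounded_variation (a₁ b₁ : ℝ) (hab : a₁ < b₁) (f : ℝ → ℝ)
    (hBV : BoundedVariationOn f (Icc a₁ b₁)) (t : ℝ) (ht : t ≠ 0) :
    |∫ s in Icc a₁ b₁, f s * Real.cos (t * s)| ≤
        4 * ((eVariationOn f (Icc a₁ b₁)).toReal +
          essSup (fun s => |f s|) (volume.restrict (Icc a₁ b₁))) / |t| ∧
    |∫ s in Icc a₁ b₁, f s * Real.sin (t * s)| ≤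
        4 * ((eVariationOn f (Icc a₁ b₁)).toReal +
          essSup (fun s => |f s|) (volume.restrict (Icc a₁ b₁))) / |t| := by
  set V := (eVariationOn f (Icc a₁ b₁)).toReal
  set M := essSup (fun s => |f s|) (volume.restrict (Icc a₁ b₁))
  have hM : ∀ᵐ s ∂volume.restrict (Icc a₁ b₁), |f s| ≤ M := hBV.ae_abs_le_essSup measurableSet_Icc
  have hM0 : 0 ≤ M := by
    have : (ae (volume.restrict (Icc a₁ b₁))).NeBot := ae_restrict_neBot.2 (by simp [hab])
    obtain ⟨s, hs⟩ := hM.exists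
    exact (abs_nonneg _).trans hs
  have hbound : |t⁻¹ * π| * (V + 2 * M) / 2 ≤ 4 * (V + M) / |t| := by
    have hV : 0 ≤ V := ENNReal.toReal_nonneg
    rw [abs_mul, abs_inv, abs_of_pos pi_pos, inv_mul_eq_div, div_mul_eq_mul_div, div_div,
      div_le_div_iff₀ (by positivity) (abs_pos.2 ht)]
    have hπ : π * (V + 2 * M) ≤ 4 * (V + M) * 2 := by nlinarith [pi_le_four]
    nlinarith [mul_le_mul_of_nonneg_right hπ (abs_nonneg t)]
  exact ⟨(hBV.abs_setIntegral_mul_le_of_antiperiodic hab.le hM hM0 (by fun_prop)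
      (fun s => abs_cos_le_one _) (cos_antiperiodic.const_mul ht)).trans hbound,
    (hBV.abs_setIntegral_mul_le_of_antiperiodic hab.le hM hM0 (by fun_prop)
      (fun s => abs_sin_le_one _) (sin_antiperiodic.const_mul ht)).trans hbound⟩
end

section
/- For every t ∈ ℝ, every μ′ ∈ ℝ and every μ ∈ ℝ, the function x ↦ K_{1,0}(t, x; μ′) is integrable with respect to F_μ and ∫ K_{1,0}(t, x; μ′) dF_μ(x) = ∫_{−1}^{1} ω(s)·cos(t·s·(μ−μ′)) ds. In particular, for every t ∈ ℝ and μ₀ ∈ ℝ, ∫ K_{1,0}(t, x; μ₀) dF_{μ₀}(x) = 1. -/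
/-!
Translating `P₀` by `μ` multiplies its characteristic function by `exp(iaμ)`, and since that
characteristic function is the real `r₀`, `∫ cos(a(x − μ′)) dF_μ = r₀(a) cos(a(μ − μ′))`.
The integrand of `K₁₀` is bounded on `[−1,1] × ℝ` because `s ↦ 1/r₀(ts)` is continuous on the
compact `[−1,1]`, so Fubini lets us integrate in `x` first, and the factor `r₀(ts)` cancels.
-/

open MeasureTheory Complex

section Fubini

variable {α E : Type*} [MeasurableSpace α] [NormedAddCommGroup E]
  {ν : Measure α} [IsFiniteMeasure ν] {f : ℝ → α → E} {a b C : ℝ}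

lemma integrable_uncurry_restrict_uIoc_prod_of_norm_le
    (hf : AEStronglyMeasurable (Function.uncurry f) ((volume.restrict (Set.uIoc a b)).prod ν))
    (hC : ∀ s ∈ Set.uIoc a b, ∀ x, ‖f s x‖ ≤ C) :
    Integrable (Function.uncurry f) ((volume.restrict (Set.uIoc a b)).prod ν) := by
  have : IsFiniteMeasure (volume.restrict (Set.uIoc a b)) :=
    isFiniteMeasure_restrict.2 measure_Ioc_lt_top.ne
  refine Integrable.of_bound hf C ?_
  filter_upwards [Measure.quasiMeasurePreserving_fst.ae (ae_restrict_mem measurableSet_uIoc)]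
    with p hp using hC p.1 hp p.2

lemma integrable_intervalIntegral_of_norm_le [NormedSpace ℝ E]
    (hf : AEStronglyMeasurable (Function.uncurry f) ((volume.restrict (Set.uIoc a b)).prod ν))
    (hC : ∀ s ∈ Set.uIoc a b, ∀ x, ‖f s x‖ ≤ C) :
    Integrable (fun x => ∫ s in a..b, f s x) ν := by
  simp_rw [intervalIntegral.intervalIntegral_eq_integral_uIoc]
  exact (integrable_uncurry_restrict_uIoc_prod_of_norm_le hf hC).integral_prod_right.smul _

lemma integral_intervalIntegral_swap_of_norm_le [NormedSpace ℝ E]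
    (hf : AEStronglyMeasurable (Function.uncurry f) ((volume.restrict (Set.uIoc a b)).prod ν))
    (hC : ∀ s ∈ Set.uIoc a b, ∀ x, ‖f s x‖ ≤ C) :
    ∫ x, (∫ s in a..b, f s x) ∂ν = ∫ s in a..b, ∫ x, f s x ∂ν :=
  (intervalIntegral_integral_swap (integrable_uncurry_restrict_uIoc_prod_of_norm_le hf hC)).symm

end Fubini

lemma integrable_cexp_mul_I {μ : Measure ℝ} [IsFiniteMeasure μ] (a : ℝ) :
    Integrable (fun x : ℝ => cexp (a * x * I)) μ :=
  Integrable.of_bound (by fun_prop) 1 (.of_forall fun x => by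
    rw [← ofReal_mul, norm_exp_ofReal_mul_I])

lemma integral_cos_mul_sub_eq_re {μ : Measure ℝ} [IsFiniteMeasure μ] (a c : ℝ) :
    ∫ x, Real.cos (a * (x - c)) ∂μ = (charFun μ a * cexp (-(a * c) * I)).re := by
  have hre (x : ℝ) : Real.cos (a * (x - c)) = (cexp (a * x * I) * cexp (-(a * c) * I)).re := by
    rw [← Complex.exp_add, ← exp_ofReal_mul_I_re]
    congr 2
    push_cast
    ring
  simp_rw [hre, charFun_apply_real, ← integral_mul_const]
  exact integral_re ((integrable_cexp_mul_I a).mul_const _)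

lemma integral_cos_mul_sub_map_add_const {μ : Measure ℝ} [IsFiniteMeasure μ] {a r : ℝ}
    (hr : charFun μ a = r) (m c : ℝ) :
    ∫ x, Real.cos (a * (x - c)) ∂(μ.map (· + m)) = r * Real.cos (a * (m - c)) := by
  rw [integral_cos_mul_sub_eq_re, charFun_map_add_const, hr, mul_assoc, ← Complex.exp_add,
    re_ofReal_mul, ← exp_ofReal_mul_I_re]
  congr 3
  simp only [RCLike.inner_apply, conj_trivial]
  push_cast
  ring

lemma continuous_of_charFun_eq_ofReal {μ : Measure ℝ} [IsFiniteMeasure μ] {r : ℝ → ℝ}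
    (hr : ∀ a, charFun μ a = r a) : Continuous r := by
  have : r = re ∘ charFun μ := funext fun a => by simp [hr]
  exact this ▸ continuous_re.comp continuous_charFun

/-- The paper's `K_{1,0}(t, x; c)`. -/
noncomputable def matchingKernel (ω r : ℝ → ℝ) (t c x : ℝ) : ℝ :=
  ∫ s in (-1 : ℝ)..1, ω s * Real.cos (t * s * (x - c)) / r (t * s)

section MatchingKernel

variable {ω r : ℝ → ℝ} {C : ℝ}

lemma exists_norm_matchingKernel_integrand_le (hr : Continuous r) (hr₀ : ∀ a, r a ≠ 0)
    (hC : ∀ s, ‖ω s‖ ≤ C) (t c : ℝ) :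
    ∃ M, ∀ s ∈ Set.uIoc (-1 : ℝ) 1, ∀ x, ‖ω s * Real.cos (t * s * (x - c)) / r (t * s)‖ ≤ M := by
  obtain ⟨M, hM⟩ := (isCompact_uIcc (a := (-1 : ℝ)) (b := 1)).exists_bound_of_continuousOn
    ((hr.comp (continuous_const_mul t)).inv₀ fun s => hr₀ _).continuousOn
  refine ⟨C * M, fun s hs x => ?_⟩
  have hMs : ‖(r (t * s))⁻¹‖ ≤ M := hM s (Set.uIoc_subset_uIcc hs)
  calc ‖ω s * Real.cos (t * s * (x - c)) / r (t * s)‖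
      = ‖ω s‖ * ‖Real.cos (t * s * (x - c))‖ * ‖(r (t * s))⁻¹‖ := by
        simp only [div_eq_mul_inv, norm_mul]
    _ ≤ ‖ω s‖ * 1 * ‖(r (t * s))⁻¹‖ := by gcongr; exact Real.abs_cos_le_one _
    _ ≤ C * M := by
        rw [mul_one]
        exact mul_le_mul (hC s) hMs (norm_nonneg _) ((norm_nonneg _).trans (hC s))

lemma integrable_matchingKernel (hω : Measurable ω) (hr : Continuous r) (hr₀ : ∀ a, r a ≠ 0)
    (hC : ∀ s, ‖ω s‖ ≤ C) {ν : Measure ℝ} [IsFiniteMeasure ν] (t c : ℝ) :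
    Integrable (matchingKernel ω r t c) ν := by
  obtain ⟨M, hM⟩ := exists_norm_matchingKernel_integrand_le hr hr₀ hC t c
  have := hr.measurable
  exact integrable_intervalIntegral_of_norm_le (Measurable.aestronglyMeasurable (by fun_prop)) hM

lemma integral_matchingKernel_map_add_const {P : Measure ℝ} [IsFiniteMeasure P]
    (hP : ∀ a, charFun P a = r a) (hω : Measurable ω) (hr₀ : ∀ a, r a ≠ 0)
    (hC : ∀ s, ‖ω s‖ ≤ C) (t c m : ℝ) :
    ∫ x, matchingKernel ω r t c x ∂(P.map (· + m)) =
      ∫ s in (-1 : ℝ)..1, ω s * Real.cos (t * s * (m - c)) := by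
  have hr := continuous_of_charFun_eq_ofReal hP
  obtain ⟨M, hM⟩ := exists_norm_matchingKernel_integrand_le hr hr₀ hC t c
  have := hr.measurable
  unfold matchingKernel
  rw [integral_intervalIntegral_swap_of_norm_le (Measurable.aestronglyMeasurable (by fun_prop)) hM]
  refine intervalIntegral.integral_congr fun s _ => ?_
  rw [integral_div, integral_const_mul, integral_cos_mul_sub_map_add_const (hP _)]
  field_simp [hr₀ (t * s)]

end MatchingKernel

theorem integral_matching_point_null_general
    (P₀ : Measure ℝ) [IsProbabilityMeasure P₀]
    (r₀ : ℝ → ℝ) (hr₀pos : ∀ t : ℝ, 0 < r₀ t)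
    (hchar : ∀ t : ℝ,
      (∫ x, Complex.exp (Complex.I * (t : ℂ) * (x : ℂ)) ∂P₀) = ((r₀ t : ℝ) : ℂ))
    (F : ℝ → Measure ℝ) (hF : ∀ μ : ℝ, F μ = Measure.map (fun x => x + μ) P₀)
    (ω : ℝ → ℝ) (hω_meas : Measurable ω) (hω_nonneg : ∀ s, 0 ≤ ω s)
    (hω_bdd : ∃ C : ℝ, ∀ s, ω s ≤ C)
    (hω_int : (∫ s in (-1:ℝ)..1, ω s) = 1)
    (K₁₀ : ℝ → ℝ → ℝ → ℝ)
    (hK : ∀ t x μ', K₁₀ t x μ' =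
      ∫ s in (-1:ℝ)..1, ω s * Real.cos (t * s * (x - μ')) / r₀ (t * s)) :
    (∀ t μ' μ : ℝ,
        Integrable (fun x => K₁₀ t x μ') (F μ) ∧
        (∫ x, K₁₀ t x μ' ∂(F μ)) = ∫ s in (-1:ℝ)..1, ω s * Real.cos (t * s * (μ - μ'))) ∧
    (∀ t μ₀ : ℝ, (∫ x, K₁₀ t x μ₀ ∂(F μ₀)) = 1) := by
  obtain ⟨C, hC⟩ := hω_bdd
  have hφ (t : ℝ) : charFun P₀ t = r₀ t := by
    rw [charFun_apply_real, ← hchar t]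
    congr with x
    ring_nf
  have hr₀ (t : ℝ) : r₀ t ≠ 0 := (hr₀pos t).ne'
  have hωC (s : ℝ) : ‖ω s‖ ≤ C := (Real.norm_of_nonneg (hω_nonneg s)).trans_le (hC s)
  have hK_eq (t μ' : ℝ) : (fun x => K₁₀ t x μ') = matchingKernel ω r₀ t μ' := funext (hK t · μ')
  have main (t μ' μ : ℝ) : Integrable (fun x => K₁₀ t x μ') (F μ) ∧
      (∫ x, K₁₀ t x μ' ∂(F μ)) = ∫ s in (-1:ℝ)..1, ω s * Real.cos (t * s * (μ - μ')) := by
    rw [hK_eq, hF]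
    exact ⟨integrable_matchingKernel hω_meas (continuous_of_charFun_eq_ofReal hφ) hr₀ hωC t μ',
      integral_matchingKernel_map_add_const hφ hω_meas hr₀ hωC t μ' μ⟩
  refine ⟨main, fun t μ₀ => ?_⟩
  simp [(main t μ₀ μ₀).2, hω_int]

/-- For a Type I location-shift family `F_μ` (translates of a probability measure `P₀` whose
characteristic function `r₀` is real and strictly positive) and an even bounded probability
density `ω` on `[−1,1]`, the matching function
`K₁₀(t, x; μ′) = ∫_{−1}^{1} ω(s) cos(ts(x−μ′))/r₀(ts) ds` is `F_μ`-integrable with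
`∫ K₁₀(t, x; μ′) dF_μ(x) = ∫_{−1}^{1} ω(s) cos(ts(μ−μ′)) ds`; in particular
`∫ K₁₀(t, x; μ₀) dF_{μ₀}(x) = 1`. -/
theorem integral_matching_point_null
    (P₀ : Measure ℝ) [IsProbabilityMeasure P₀]
    (r₀ : ℝ → ℝ) (hr₀pos : ∀ t : ℝ, 0 < r₀ t)
    (hchar : ∀ t : ℝ,
      (∫ x, Complex.exp (Complex.I * (t : ℂ) * (x : ℂ)) ∂P₀) = ((r₀ t : ℝ) : ℂ))
    (F : ℝ → Measure ℝ) (hF : ∀ μ : ℝ, F μ = Measure.map (fun x => x + μ) P₀)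
    (ω : ℝ → ℝ) (hω_meas : Measurable ω) (hω_nonneg : ∀ s, 0 ≤ ω s)
    (hω_even : ∀ s, ω (-s) = ω s)
    (hω_bdd : ∃ C : ℝ, ∀ s, ω s ≤ C)
    (hω_supp : ∀ s : ℝ, s ∉ Set.Icc (-1:ℝ) 1 → ω s = 0)
    (hω_int : (∫ s in (-1:ℝ)..1, ω s) = 1)
    (K₁₀ : ℝ → ℝ → ℝ → ℝ)
    (hK : ∀ t x μ', K₁₀ t x μ' =
      ∫ s in (-1:ℝ)..1, ω s * Real.cos (t * s * (x - μ')) / r₀ (t * s)) :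
    (∀ t μ' μ : ℝ,
        Integrable (fun x => K₁₀ t x μ') (F μ) ∧
        (∫ x, K₁₀ t x μ' ∂(F μ)) = ∫ s in (-1:ℝ)..1, ω s * Real.cos (t * s * (μ - μ'))) ∧
    (∀ t μ₀ : ℝ, (∫ x, K₁₀ t x μ₀ ∂(F μ₀)) = 1) :=
  integral_matching_point_null_general P₀ r₀ hr₀pos hchar F hF ω hω_meas hω_nonneg hω_bdd hω_int K₁₀
    hK
end

section
/- Suppose in addition that ∫ x² dP₀(x) < ∞. Let μ₁,…,μ_m ∈ ℝ, let z₁,…,z_m be independent random variables with z_i distributed according to F_{μ_i}, and set e_m(t) = (1/m) Σ_{i=1}^m ( K(t, z_i) − E[K(t, z_i)] ). Then for every t ∈ ℝ and every m ≥ 1, Var(e_m(t)) ≤ (2/m)·g(t)²·( ‖ω‖_∞² + π^{−2}(b−a)²·t² ). -/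
/-!
Every cosine integrand in `K(t, ·)` is dominated by `‖ω‖_∞ / r₀(t s)` or `1 / r₀(t s)`, so
`K(t, ·)` is continuous and `|K(t, x)| ≤ g(t) (‖ω‖_∞ + |t| |b - a| / (2π))` uniformly in `x`,
whatever the laws of the `z_i`. A variable with values in an interval of half-length `B` has
variance at most `B²`, and pairwise independence makes the variance of an average of `m` such
variables at most `B² / m`. The constant follows from `(p + q)² ≤ 2 (p² + q²)` and
`1 / (4π²) ≤ 1 / π²`.
-/

open MeasureTheory ProbabilityTheory Real

lemma continuous_of_integral_cexp_eq {P₀ : Measure ℝ} [IsFiniteMeasure P₀] {r₀ : ℝ → ℝ}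
    (hchar : ∀ t : ℝ,
      (∫ x, Complex.exp (Complex.I * (t : ℂ) * (x : ℂ)) ∂P₀) = ((r₀ t : ℝ) : ℂ)) :
    Continuous r₀ := by
  have hr₀ : r₀ = fun t => (charFun P₀ t).re := by
    funext t
    simp only [charFun_apply_real, mul_comm _ Complex.I, ← mul_assoc, hchar, Complex.ofReal_re]
  rw [hr₀]
  fun_prop

/-- With `φ = ω` and `u = x - μ'` this is `K_{1,0}(t, x; μ')`; with `φ = 1` and `u = x - y` it is
the inner integral of `K₁`. -/
noncomputable def weightedCosIntegral (r φ : ℝ → ℝ) (t u : ℝ) : ℝ :=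
  ∫ s in (-1:ℝ)..1, φ s * cos (t * s * u) / r (t * s)

section WeightedCosIntegral

variable {r φ : ℝ → ℝ} {S : ℝ} (t : ℝ)

lemma intervalIntegrable_one_div_comp_mul (hr : Continuous r) (hr_pos : ∀ t, 0 < r t)
    (α β : ℝ) : IntervalIntegrable (fun s => 1 / r (t * s)) volume α β :=
  (continuous_const.div (by fun_prop) fun s => (hr_pos _).ne').intervalIntegrable _ _

lemma integral_one_div_comp_mul_nonneg (hr_pos : ∀ t, 0 < r t) :
    0 ≤ ∫ s in (-1:ℝ)..1, 1 / r (t * s) :=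
  intervalIntegral.integral_nonneg (by norm_num) fun s _ => (one_div_pos.2 (hr_pos _)).le

lemma abs_mul_cos_div_le (hr_pos : ∀ t, 0 < r t) (hφ : ∀ s, |φ s| ≤ S) (s u : ℝ) :
    |φ s * cos (t * s * u) / r (t * s)| ≤ S * (1 / r (t * s)) := by
  rw [abs_div, abs_mul, abs_of_pos (hr_pos _), mul_one_div]
  have hnum : |φ s| * |cos (t * s * u)| ≤ S :=
    (mul_le_mul (hφ s) (abs_cos_le_one _) (abs_nonneg _) ((abs_nonneg _).trans (hφ s))).trans_eq
      (mul_one S)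
  exact div_le_div_of_nonneg_right hnum (hr_pos _).le

lemma abs_weightedCosIntegral_le (hr : Continuous r) (hr_pos : ∀ t, 0 < r t)
    (hφ : ∀ s, |φ s| ≤ S) (u : ℝ) :
    |weightedCosIntegral r φ t u| ≤ S * ∫ s in (-1:ℝ)..1, 1 / r (t * s) := by
  have h := intervalIntegral.norm_integral_le_abs_of_norm_le
    (ae_of_all _ fun s => (norm_eq_abs _).trans_le (abs_mul_cos_div_le t hr_pos hφ s u))
    ((intervalIntegrable_one_div_comp_mul t hr hr_pos (-1) 1).const_mul S)
  rwa [intervalIntegral.integral_const_mul, abs_of_nonneg (mul_nonneg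
    ((abs_nonneg _).trans (hφ 0)) (integral_one_div_comp_mul_nonneg t hr_pos))] at h

lemma continuous_weightedCosIntegral (hr : Continuous r) (hr_pos : ∀ t, 0 < r t)
    (hφ_meas : Measurable φ) (hφ : ∀ s, |φ s| ≤ S) :
    Continuous (weightedCosIntegral r φ t) := by
  refine intervalIntegral.continuous_of_dominated_interval
    (fun u => ?_) (fun u => ae_of_all _ fun s _ => ?_)
    ((intervalIntegrable_one_div_comp_mul t hr hr_pos (-1) 1).const_mul S)
    (ae_of_all _ fun s _ => ?_)
  · exact ((hφ_meas.mul (by fun_prop)).div (hr.comp (continuous_const_mul t)).measurable)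
      |>.aestronglyMeasurable
  · exact (norm_eq_abs _).trans_le (abs_mul_cos_div_le t hr_pos hφ s u)
  · fun_prop

end WeightedCosIntegral

noncomputable def boundedNullKernel (r ω : ℝ → ℝ) (a b t x : ℝ) : ℝ :=
  t / (2 * π) * (∫ y in a..b, weightedCosIntegral r 1 t (x - y)) -
    1 / 2 * (weightedCosIntegral r ω t (x - a) + weightedCosIntegral r ω t (x - b))

section BoundedNullKernel

variable {r ω : ℝ → ℝ} {S : ℝ} (a b t : ℝ)

lemma abs_boundedNullKernel_le (hr : Continuous r) (hr_pos : ∀ t, 0 < r t)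
    (hω : ∀ s, |ω s| ≤ S) (x : ℝ) :
    |boundedNullKernel r ω a b t x| ≤
      (∫ s in (-1:ℝ)..1, 1 / r (t * s)) * (S + |t| * |b - a| / (2 * π)) := by
  set g := ∫ s in (-1:ℝ)..1, 1 / r (t * s)
  have hone : ∀ s, |(1 : ℝ → ℝ) s| ≤ 1 := fun s => by simp
  have hK₁ : |∫ y in a..b, weightedCosIntegral r 1 t (x - y)| ≤ 1 * g * |b - a| :=
    (norm_eq_abs _).symm.trans_le <| intervalIntegral.norm_integral_le_of_norm_le_const fun _ _ =>
      (norm_eq_abs _).trans_le (abs_weightedCosIntegral_le t hr hr_pos hone _)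
  have hK₁₀ : ∀ μ, |weightedCosIntegral r ω t (x - μ)| ≤ S * g := fun μ =>
    abs_weightedCosIntegral_le t hr hr_pos hω _
  have hcoef : |t / (2 * π)| = |t| / (2 * π) := by
    rw [abs_div, abs_of_pos (by positivity : (0:ℝ) < 2 * π)]
  calc |boundedNullKernel r ω a b t x|
      ≤ |t / (2 * π)| * |∫ y in a..b, weightedCosIntegral r 1 t (x - y)| +
          1 / 2 * (|weightedCosIntegral r ω t (x - a)| + |weightedCosIntegral r ω t (x - b)|) := by
        unfold boundedNullKernel
        refine (abs_sub _ _).trans (add_le_add (abs_mul _ _).le ?_)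
        rw [abs_mul, abs_of_pos one_half_pos]
        gcongr
        exact abs_add_le _ _
    _ ≤ |t| / (2 * π) * (1 * g * |b - a|) + 1 / 2 * (S * g + S * g) := by
        rw [hcoef]
        gcongr
        exacts [hK₁₀ a, hK₁₀ b]
    _ = g * (S + |t| * |b - a| / (2 * π)) := by ring

lemma continuous_boundedNullKernel (hr : Continuous r) (hr_pos : ∀ t, 0 < r t)
    (hω_meas : Measurable ω) (hω : ∀ s, |ω s| ≤ S) :
    Continuous (boundedNullKernel r ω a b t) := by
  have hK₁ := continuous_weightedCosIntegral (φ := 1) t hr hr_pos measurable_one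
    (S := 1) fun s => by simp
  have hK₁₀ := continuous_weightedCosIntegral t hr hr_pos hω_meas hω
  unfold boundedNullKernel
  refine Continuous.sub ?_ (by fun_prop)
  exact continuous_const.mul
    (intervalIntegral.continuous_parametric_intervalIntegral_of_continuous' (by fun_prop) a b)

end BoundedNullKernel

lemma sq_mul_add_le_two_mul (g S t d : ℝ) :
    (g * (S + |t| * |d| / (2 * π))) ^ 2 ≤ 2 * g ^ 2 * (S ^ 2 + (π ^ 2)⁻¹ * d ^ 2 * t ^ 2) := by
  have hq : (|t| * |d| / (2 * π)) ^ 2 ≤ (π ^ 2)⁻¹ * d ^ 2 * t ^ 2 :=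
    calc (|t| * |d| / (2 * π)) ^ 2 = (π ^ 2)⁻¹ * d ^ 2 * t ^ 2 / 4 := by
          rw [div_pow, mul_pow, mul_pow, sq_abs, sq_abs]; ring
      _ ≤ (π ^ 2)⁻¹ * d ^ 2 * t ^ 2 := div_le_self (by positivity) (by norm_num)
  calc (g * (S + |t| * |d| / (2 * π))) ^ 2 = g ^ 2 * (S + |t| * |d| / (2 * π)) ^ 2 := mul_pow _ _ _
    _ ≤ g ^ 2 * (2 * (S ^ 2 + (|t| * |d| / (2 * π)) ^ 2)) := by gcongr; exact add_sq_le
    _ ≤ 2 * g ^ 2 * (S ^ 2 + (π ^ 2)⁻¹ * d ^ 2 * t ^ 2) := by nlinarith [sq_nonneg g]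

lemma variance_average_sub_le {Ω ι : Type*} [MeasurableSpace Ω] {P : Measure Ω}
    [IsProbabilityMeasure P] [Fintype ι] {Y : ι → Ω → ℝ} (hY : ∀ i, AEMeasurable (Y i) P)
    (hindep : Pairwise fun i j => IndepFun (Y i) (Y j) P) {B : ℝ} (hB : ∀ i ω, |Y i ω| ≤ B)
    (c : ι → ℝ) :
    variance (fun ω => 1 / (Fintype.card ι : ℝ) * ∑ i, (Y i ω - c i)) P ≤
      B ^ 2 / Fintype.card ι := by
  set X : ι → Ω → ℝ := fun i ω => Y i ω - c i
  have hX_meas : ∀ i, AEMeasurable (X i) P := fun i => (hY i).sub_const _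
  have hX_bdd : ∀ i, ∀ᵐ ω ∂P, X i ω ∈ Set.Icc (-B - c i) (B - c i) := fun i =>
    ae_of_all _ fun ω => by
      have := abs_le.1 (hB i ω)
      constructor <;> simp only [X] <;> linarith
  have hX_var : ∀ i, variance (X i) P ≤ B ^ 2 := fun i =>
    (variance_le_sq_of_bounded (hX_bdd i) (hX_meas i)).trans_eq (by ring)
  have hsum : variance (∑ i, X i) P = ∑ i, variance (X i) P :=
    IndepFun.variance_sum
      (fun i _ => memLp_of_bounded (hX_bdd i) (hX_meas i).aestronglyMeasurable 2)
      fun i _ j _ hij => (hindep hij).comp (measurable_id.sub_const _) (measurable_id.sub_const _)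
  have hmean : (fun ω => 1 / (Fintype.card ι : ℝ) * ∑ i, X i ω) =
      fun ω => 1 / (Fintype.card ι : ℝ) * (∑ i, X i) ω := by
    simp only [Finset.sum_apply]
  rw [hmean, variance_const_mul, hsum]
  calc (1 / (Fintype.card ι : ℝ)) ^ 2 * ∑ i, variance (X i) P
      ≤ (1 / (Fintype.card ι : ℝ)) ^ 2 * ∑ _i : ι, B ^ 2 := by
        gcongr with i; exact hX_var i
    _ = B ^ 2 / Fintype.card ι := by
        rw [Finset.sum_const, Finset.card_univ, nsmul_eq_mul]
        rcases (Fintype.card ι).eq_zero_or_pos with h | h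
        · simp [h]
        · field_simp

theorem variance_bound_bounded_null_general
    (P₀ : Measure ℝ) [IsProbabilityMeasure P₀]
    (r₀ : ℝ → ℝ) (hr₀pos : ∀ t : ℝ, 0 < r₀ t)
    (hchar : ∀ t : ℝ,
      (∫ x, Complex.exp (Complex.I * (t : ℂ) * (x : ℂ)) ∂P₀) = ((r₀ t : ℝ) : ℂ))
    (F : ℝ → Measure ℝ)
    (ω : ℝ → ℝ) (hω_meas : Measurable ω) (hω_nonneg : ∀ s, 0 ≤ ω s)
    (hω_bdd : ∃ C : ℝ, ∀ s, ω s ≤ C)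
    (a b : ℝ)
    (K₁₀ : ℝ → ℝ → ℝ → ℝ)
    (hK₁₀ : ∀ t x μ', K₁₀ t x μ' =
      ∫ s in (-1:ℝ)..1, ω s * Real.cos (t * s * (x - μ')) / r₀ (t * s))
    (K₁ : ℝ → ℝ → ℝ)
    (hK₁ : ∀ t x, K₁ t x =
      (t / (2 * π)) * ∫ y in a..b, ∫ s in (-1:ℝ)..1, Real.cos (t * s * (x - y)) / r₀ (t * s))
    (K : ℝ → ℝ → ℝ)
    (hK : ∀ t x, K t x = K₁ t x - (1 / 2) * (K₁₀ t x a + K₁₀ t x b))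
    (g : ℝ → ℝ) (hg : ∀ t, g t = ∫ s in (-1:ℝ)..1, 1 / r₀ (t * s))
    {Ω : Type*} [MeasurableSpace Ω] (P : Measure Ω) [IsProbabilityMeasure P]
    (m : ℕ)
    (μs : Fin m → ℝ) (z : Fin m → Ω → ℝ)
    (hzmeas : ∀ i, Measurable (z i))
    (hindep : iIndepFun z P)
    (em : ℝ → Ω → ℝ)
    (hem : ∀ t ω', em t ω' =
      (1 / (m : ℝ)) * ∑ i, (K t (z i ω') - ∫ x, K t x ∂(F (μs i)))) :
    ∀ t : ℝ,
      variance (em t) P ≤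
        (2 / (m : ℝ)) * (g t) ^ 2 * ((⨆ s : ℝ, |ω s|) ^ 2 + (π ^ 2)⁻¹ * (b - a) ^ 2 * t ^ 2) := by
  intro t
  have hr₀ : Continuous r₀ := continuous_of_integral_cexp_eq hchar
  obtain ⟨C, hC⟩ := hω_bdd
  have hω_le : ∀ s, |ω s| ≤ ⨆ s : ℝ, |ω s| := le_ciSup ⟨C, by
    rintro _ ⟨s, rfl⟩
    exact (abs_of_nonneg (hω_nonneg s)).trans_le (hC s)⟩
  have hKt : K t = boundedNullKernel r₀ ω a b t := by
    funext x
    simp [hK, hK₁, hK₁₀, boundedNullKernel, weightedCosIntegral]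
  have hK_meas : Measurable (K t) :=
    hKt ▸ (continuous_boundedNullKernel a b t hr₀ hr₀pos hω_meas hω_le).measurable
  have hvar := variance_average_sub_le (Y := fun i ω' => K t (z i ω'))
    (fun i => (hK_meas.comp (hzmeas i)).aemeasurable)
    (fun i j hij => (hindep.indepFun hij).comp hK_meas hK_meas)
    (fun i ω' => hKt ▸ abs_boundedNullKernel_le a b t hr₀ hr₀pos hω_le (z i ω'))
    (fun i => ∫ x, K t x ∂(F (μs i)))
  rw [Fintype.card_fin, ← hg] at hvar
  rw [show em t = _ from funext (hem t)]
  calc _ ≤ _ := hvar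
    _ ≤ 2 * g t ^ 2 * ((⨆ s : ℝ, |ω s|) ^ 2 + (π ^ 2)⁻¹ * (b - a) ^ 2 * t ^ 2) / m :=
        div_le_div_of_nonneg_right (sq_mul_add_le_two_mul _ _ _ _) m.cast_nonneg
    _ = _ := by ring

/-- Variance bound for the error of the proportion estimator for a bounded null `(a, b)` in a
Type I location-shift family with finite second moments: for independent `z_i ∼ F_{μ_i}` and
`e_m(t) = (1/m) Σ_i (K(t, z_i) − E[K(t, z_i)])`, one has
`Var(e_m(t)) ≤ (2/m) g(t)² (‖ω‖_∞² + π⁻²(b−a)² t²)`. -/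
theorem variance_bound_bounded_null
    (P₀ : Measure ℝ) [IsProbabilityMeasure P₀]
    (r₀ : ℝ → ℝ) (hr₀pos : ∀ t : ℝ, 0 < r₀ t)
    (hchar : ∀ t : ℝ,
      (∫ x, Complex.exp (Complex.I * (t : ℂ) * (x : ℂ)) ∂P₀) = ((r₀ t : ℝ) : ℂ))
    (hP₀2 : Integrable (fun x : ℝ => x ^ 2) P₀)
    (F : ℝ → Measure ℝ) (hF : ∀ μ : ℝ, F μ = Measure.map (fun x => x + μ) P₀)
    (ω : ℝ → ℝ) (hω_meas : Measurable ω) (hω_nonneg : ∀ s, 0 ≤ ω s)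
    (hω_even : ∀ s, ω (-s) = ω s)
    (hω_bdd : ∃ C : ℝ, ∀ s, ω s ≤ C)
    (hω_supp : ∀ s : ℝ, s ∉ Set.Icc (-1:ℝ) 1 → ω s = 0)
    (hω_int : (∫ s in (-1:ℝ)..1, ω s) = 1)
    (a b : ℝ) (hab : a < b)
    (K₁₀ : ℝ → ℝ → ℝ → ℝ)
    (hK₁₀ : ∀ t x μ', K₁₀ t x μ' =
      ∫ s in (-1:ℝ)..1, ω s * Real.cos (t * s * (x - μ')) / r₀ (t * s))
    (K₁ : ℝ → ℝ → ℝ)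
    (hK₁ : ∀ t x, K₁ t x =
      (t / (2 * π)) * ∫ y in a..b, ∫ s in (-1:ℝ)..1, Real.cos (t * s * (x - y)) / r₀ (t * s))
    (K : ℝ → ℝ → ℝ)
    (hK : ∀ t x, K t x = K₁ t x - (1 / 2) * (K₁₀ t x a + K₁₀ t x b))
    (g : ℝ → ℝ) (hg : ∀ t, g t = ∫ s in (-1:ℝ)..1, 1 / r₀ (t * s))
    {Ω : Type*} [MeasurableSpace Ω] (P : Measure Ω) [IsProbabilityMeasure P]
    (m : ℕ) (hm : 1 ≤ m)
    (μs : Fin m → ℝ) (z : Fin m → Ω → ℝ)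
    (hzmeas : ∀ i, Measurable (z i))
    (hindep : iIndepFun z P)
    (hlaw : ∀ i, Measure.map (z i) P = F (μs i))
    (em : ℝ → Ω → ℝ)
    (hem : ∀ t ω', em t ω' =
      (1 / (m : ℝ)) * ∑ i, (K t (z i ω') - ∫ x, K t x ∂(F (μs i)))) :
    ∀ t : ℝ,
      variance (em t) P ≤
        (2 / (m : ℝ)) * (g t) ^ 2 * ((⨆ s : ℝ, |ω s|) ^ 2 + (π ^ 2)⁻¹ * (b - a) ^ 2 * t ^ 2) :=
  variance_bound_bounded_null_general P₀ r₀ hr₀pos hchar F ω hω_meas hω_nonneg hω_bdd a b K₁₀ hK₁₀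
    K₁ hK₁ K hK g hg P m μs z hzmeas hindep em hem
end

section
/- Assume ∫ |x| dP₀(x) < ∞, assume the cumulative distribution function of P₀ is differentiable on ℝ, assume r₀ is differentiable on ℝ, and assume that for each t > 0 the condition ∫₀^t (1/y) ( ∫_{−1}^{1} | (d/ds)(1/r₀(y·s)) | ds ) dy < ∞ holds. Define K₁(t, x) = (1/(2π)) ∫₀^1 ( ∫_{−1}^{1} [ (sin(y·t·s·x)/y)·(∂/∂s)(1/r₀(t·y·s)) + t·x·cos(t·y·s·x)/r₀(t·y·s) ] ds ) dy. Then for every μ ∈ ℝ and every t > 0, the function x ↦ K₁(t, x) is integrable with respect to F_μ and ∫ K₁(t, x) dF_μ(x) = (1/π) ∫₀^t sin(μ·y)/y dy (with sin(μ·y)/y = μ at y = 0). -/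
open MeasureTheory Real Set

/-!
The `s`-integrand of `K₁` is the exact derivative of `s ↦ sin (y t s x) / (y r₀ (t y s))`, and
for almost every `y` the integrability condition on `1 / r₀` makes it integrable, so the inner
integral is a difference of boundary values; as `r₀` is real, hence even, this is
`2 sin (t y x) / (y r₀ (t y))`. This reduced kernel is bounded by a multiple of `|x|`, so Fubini
applies, and integrating `sin (t y (x + μ))` against `P₀` gives `sin (t y μ) r₀ (t y)`. What remains
is `(1/π) ∫₀¹ sin (μ t y) / y dy`, which the substitution `y ↦ t y` turns into the claim.
-/

lemma integrable_cexp_I_mul (P : Measure ℝ) [IsFiniteMeasure P] (a : ℝ) :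
    Integrable (fun x : ℝ => Complex.exp (Complex.I * a * x)) P :=
  .of_bound (by fun_prop) 1 (.of_forall fun x => by
    rw [show Complex.I * a * x = ((a * x : ℝ) : ℂ) * Complex.I by push_cast; ring,
      Complex.norm_exp_ofReal_mul_I])

section CharacteristicFunction

variable {P : Measure ℝ} [IsFiniteMeasure P] {r : ℝ → ℝ}

lemma integral_cos_mul_eq_of_integral_cexp
    (hchar : ∀ t : ℝ, ∫ x, Complex.exp (Complex.I * t * x) ∂P = r t) (a : ℝ) :
    ∫ x, cos (a * x) ∂P = r a := by
  have h := integral_re (integrable_cexp_I_mul P a)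
  rw [hchar] at h
  simpa [Complex.exp_re, ← Complex.ofReal_mul] using h

lemma even_of_integral_cexp
    (hchar : ∀ t : ℝ, ∫ x, Complex.exp (Complex.I * t * x) ∂P = r t) (u : ℝ) :
    r (-u) = r u := by
  simp only [← integral_cos_mul_eq_of_integral_cexp hchar, neg_mul, cos_neg]

lemma integral_sin_mul_add_eq_of_integral_cexp
    (hchar : ∀ t : ℝ, ∫ x, Complex.exp (Complex.I * t * x) ∂P = r t) (a μ : ℝ) :
    ∫ x, sin (a * (x + μ)) ∂P = sin (a * μ) * r a := by
  have h := integral_im ((integrable_cexp_I_mul P a).const_mul (Complex.exp (Complex.I * a * μ)))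
  have hexp : ∀ x : ℝ, Complex.exp (Complex.I * a * μ) * Complex.exp (Complex.I * a * x)
      = Complex.exp (((a * (x + μ) : ℝ) : ℂ) * Complex.I) := by
    intro x
    rw [← Complex.exp_add]
    push_cast
    ring_nf
  rw [integral_const_mul, hchar] at h
  simp only [hexp, RCLike.im_to_complex, Complex.exp_ofReal_mul_I_im] at h
  rw [h]
  simp [Complex.exp_im]

lemma integral_two_mul_sin_div_eq_of_integral_cexp
    (hchar : ∀ t : ℝ, ∫ x, Complex.exp (Complex.I * t * x) ∂P = r t) (hr0 : ∀ u, r u ≠ 0)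
    {y : ℝ} (hy : y ≠ 0) (t μ : ℝ) :
    ∫ x, 2 * sin (t * y * (x + μ)) / (y * r (t * y)) ∂P = 2 * sin (μ * (t * y)) / y := by
  rw [integral_div, integral_const_mul, integral_sin_mul_add_eq_of_integral_cexp hchar,
    mul_comm μ]
  field_simp [hr0 (t * y)]

end CharacteristicFunction

lemma integrableOn_of_lintegral_ofReal_mul_abs_lt_top {f : ℝ → ℝ} (hf : Measurable f)
    {s : Set ℝ} {c : ℝ} (hc : 0 < c)
    (h : ∫⁻ x in s, ENNReal.ofReal (c * |f x|) < ⊤) : IntegrableOn f s := by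
  have habs : IntegrableOn (fun x => c * |f x|) s :=
    ⟨by fun_prop, (hasFiniteIntegral_iff_ofReal (.of_forall fun x => by positivity)).2 h⟩
  refine (integrable_norm_iff hf.aestronglyMeasurable).1 ?_
  simpa [← mul_assoc, inv_mul_cancel₀ hc.ne'] using habs.const_mul c⁻¹

section InnerIntegral

variable {r : ℝ → ℝ}

lemma ae_intervalIntegrable_deriv_inv_comp_mul (hr : Continuous r) (hr0 : ∀ u, r u ≠ 0)
    {t : ℝ} (ht : 0 < t)
    (hcond : ∫⁻ y in Ioc 0 t, ∫⁻ s in Icc (-1 : ℝ) 1,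
      ENNReal.ofReal ((1 / y) * |deriv (fun s' => 1 / r (y * s')) s|) < ⊤) :
    ∀ᵐ y, y ∈ Ioc (0 : ℝ) 1 →
      IntervalIntegrable (deriv fun s' => 1 / r (t * y * s')) volume (-1) 1 := by
  have hD : Measurable fun p : ℝ × ℝ => deriv (fun s' => 1 / r (p.1 * s')) p.2 :=
    measurable_deriv_with_param (f := fun a s' => 1 / r (a * s'))
      (continuous_const.div (hr.comp continuous_mul) fun _ => hr0 _)
  have hfin : ∀ᵐ a, a ∈ Ioc 0 t → ∫⁻ s in Icc (-1 : ℝ) 1,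
      ENNReal.ofReal ((1 / a) * |deriv (fun s' => 1 / r (a * s')) s|) < ⊤ :=
    (ae_restrict_iff' measurableSet_Ioc).1 (ae_lt_top (by fun_prop) hcond.ne)
  filter_upwards [(Measure.quasiMeasurePreserving_smul volume ht.ne').ae hfin] with y hy hy1
  have hty : t * y ∈ Ioc 0 t := ⟨mul_pos ht hy1.1, mul_le_of_le_one_right ht.le hy1.2⟩
  refine (intervalIntegrable_iff_integrableOn_Icc_of_le (by norm_num)).2 ?_
  exact integrableOn_of_lintegral_ofReal_mul_abs_lt_top (measurable_deriv _)
    (one_div_pos.2 hty.1) (hy hty)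

lemma integral_sin_div_mul_deriv_inv_add_eq (hr : Differentiable ℝ r) (hr0 : ∀ u, r u ≠ 0)
    (heven : ∀ u, r (-u) = r u) {y : ℝ} (hy : y ≠ 0) (t x : ℝ)
    (hint : IntervalIntegrable (deriv fun s' => 1 / r (t * y * s')) volume (-1) 1) :
    ∫ s in (-1 : ℝ)..1, sin (y * t * s * x) / y * deriv (fun s' => 1 / r (t * y * s')) s +
        t * x * cos (t * y * s * x) / r (t * y * s)
      = 2 * sin (t * y * x) / (y * r (t * y)) := by
  have hderiv : ∀ s, HasDerivAt (fun s => sin (y * t * s * x) / y * (1 / r (t * y * s)))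
      (sin (y * t * s * x) / y * deriv (fun s' => 1 / r (t * y * s')) s +
        t * x * cos (t * y * s * x) / r (t * y * s)) s := by
    intro s
    have hlin : HasDerivAt (fun s => y * t * s * x) (y * t * x) s := by
      simpa using ((hasDerivAt_id s).const_mul (y * t)).mul_const x
    have hinv : HasDerivAt (fun s => 1 / r (t * y * s))
        (deriv (fun s' => 1 / r (t * y * s')) s) s := by
      have := hr0 (t * y * s)
      exact DifferentiableAt.hasDerivAt (by fun_prop (disch := assumption))
    refine ((hlin.sin.div_const y).mul hinv).congr_deriv ?_
    rw [show t * y * s * x = y * t * s * x by ring]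
    field_simp
    ring
  have hcont : Continuous fun s => t * x * cos (t * y * s * x) / r (t * y * s) := by
    have := hr.continuous
    fun_prop (disch := exact fun _ => hr0 _)
  rw [intervalIntegral.integral_eq_sub_of_hasDerivAt (fun s _ => hderiv s)
    ((hint.continuousOn_mul (by fun_prop)).add (hcont.intervalIntegrable _ _))]
  simp only [mul_neg, mul_one, neg_mul, sin_neg, heven]
  field_simp
  ring

end InnerIntegral

lemma norm_two_mul_sin_div_le {t y ρ C : ℝ} (ht : 0 ≤ t) (hy : 0 < y) (hρ : ‖1 / ρ‖ ≤ C)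
    (z : ℝ) : ‖2 * sin (t * y * z) / (y * ρ)‖ ≤ 2 * t * |z| * C := by
  have hsin : |sin (t * y * z)| ≤ t * y * |z| := by
    simpa [abs_mul, abs_of_nonneg ht, abs_of_pos hy] using abs_sin_le_abs (x := t * y * z)
  calc ‖2 * sin (t * y * z) / (y * ρ)‖ = 2 * (|sin (t * y * z)| / y) * ‖1 / ρ‖ := by
        rw [norm_div, norm_mul, norm_div, norm_mul, Real.norm_of_nonneg hy.le]
        simp only [norm_ofNat, norm_eq_abs, norm_one, one_div]
        ring
    _ ≤ 2 * (t * |z|) * C := by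
        gcongr
        rw [div_le_iff₀ hy]
        linarith
    _ = 2 * t * |z| * C := by ring

lemma integrable_prod_two_mul_sin_div {P : Measure ℝ} [IsFiniteMeasure P]
    (hP : Integrable (fun x => x) P) {r : ℝ → ℝ} (hr : Continuous r)
    {t C : ℝ} (ht : 0 ≤ t) (hC : ∀ u ∈ Icc 0 t, ‖1 / r u‖ ≤ C) (μ : ℝ) :
    Integrable (fun p : ℝ × ℝ => 2 * sin (t * p.2 * (p.1 + μ)) / (p.2 * r (t * p.2)))
      (P.prod (volume.restrict (Ioc 0 1))) := by
  have hmaj : Integrable (fun p : ℝ × ℝ => 2 * t * (|p.1| + |μ|) * C)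
      (P.prod (volume.restrict (Ioc 0 1))) :=
    (((hP.abs.add (integrable_const |μ|)).const_mul (2 * t)).mul_const C).comp_fst _
  have hmeas := hr.measurable
  refine hmaj.mono' (Measurable.aestronglyMeasurable (by fun_prop)) ?_
  filter_upwards [Measure.quasiMeasurePreserving_snd.ae (ae_restrict_mem measurableSet_Ioc)]
    with p ⟨hp0, hp1⟩
  have hC0 : 0 ≤ C := (norm_nonneg _).trans (hC 0 ⟨le_rfl, ht⟩)
  calc _ ≤ 2 * t * |p.1 + μ| * C :=
        norm_two_mul_sin_div_le ht hp0 (hC _ ⟨by positivity, mul_le_of_le_one_right ht hp1⟩) _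
    _ ≤ 2 * t * (|p.1| + |μ|) * C := by
        gcongr
        exact abs_add_le _ _

lemma intervalIntegral_div_self_eq_comp_mul (f : ℝ → ℝ) {t : ℝ} (ht : t ≠ 0) :
    ∫ y in (0 : ℝ)..t, f y / y = ∫ y in (0 : ℝ)..1, f (t * y) / y := by
  have h := intervalIntegral.integral_comp_mul_left (a := 0) (b := 1) (fun u => f u / u) ht
  simp only [mul_zero, mul_one, smul_eq_mul] at h
  rw [eq_inv_mul_iff_mul_eq₀ ht, ← intervalIntegral.integral_const_mul] at h
  rw [← h]
  refine intervalIntegral.integral_congr fun y _ => ?_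
  by_cases hy : y = 0
  · simp [hy]
  · field_simp

theorem integral_matching_one_sided_null_general
    (P₀ : Measure ℝ) [IsProbabilityMeasure P₀]
    (r₀ : ℝ → ℝ) (hr₀pos : ∀ t : ℝ, 0 < r₀ t)
    (hchar : ∀ t : ℝ,
      (∫ x, Complex.exp (Complex.I * (t : ℂ) * (x : ℂ)) ∂P₀) = ((r₀ t : ℝ) : ℂ))
    (F : ℝ → Measure ℝ) (hF : ∀ μ : ℝ, F μ = Measure.map (fun x => x + μ) P₀)
    (hP₀1 : Integrable (fun x : ℝ => x) P₀)
    (hr₀diff : Differentiable ℝ r₀)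
    (hcond : ∀ t : ℝ, 0 < t →
      (∫⁻ y in Set.Ioc (0:ℝ) t,
        ∫⁻ s in Set.Icc (-1:ℝ) 1,
          ENNReal.ofReal ((1 / y) * |deriv (fun s' : ℝ => 1 / r₀ (y * s')) s|)) < ⊤)
    (K₁ : ℝ → ℝ → ℝ)
    (hK₁ : ∀ t x, K₁ t x =
      (1 / (2 * π)) * ∫ y in (0:ℝ)..1, ∫ s in (-1:ℝ)..1,
        (Real.sin (y * t * s * x) / y) * deriv (fun s' : ℝ => 1 / r₀ (t * y * s')) s +
          t * x * Real.cos (t * y * s * x) / r₀ (t * y * s)) :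
    ∀ (μ : ℝ) (t : ℝ), 0 < t →
      Integrable (fun x => K₁ t x) (F μ) ∧
      (∫ x, K₁ t x ∂(F μ)) = (1 / π) * ∫ y in (0:ℝ)..t, Real.sin (μ * y) / y := by
  have hr₀ne : ∀ u, r₀ u ≠ 0 := fun u => (hr₀pos u).ne'
  intro μ t ht
  obtain ⟨C, hC⟩ := isCompact_Icc.exists_bound_of_continuousOn (s := Icc 0 t)
    (continuous_const.div hr₀diff.continuous hr₀ne).continuousOn
  have hK : ∀ x,
      K₁ t x = 1 / (2 * π) * ∫ y in Ioc 0 1, 2 * sin (t * y * x) / (y * r₀ (t * y)) := by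
    intro x
    rw [hK₁, intervalIntegral.integral_of_le zero_le_one]
    congr 1
    refine setIntegral_congr_ae measurableSet_Ioc ?_
    filter_upwards [ae_intervalIntegrable_deriv_inv_comp_mul hr₀diff.continuous hr₀ne ht
      (hcond t ht)] with y hy hy1
    exact integral_sin_div_mul_deriv_inv_add_eq hr₀diff hr₀ne (even_of_integral_cexp hchar)
      hy1.1.ne' t x (hy hy1)
  have hint := integrable_prod_two_mul_sin_div hP₀1 hr₀diff.continuous ht.le hC μ
  have hshift : MeasurableEmbedding (· + μ) := measurableEmbedding_addRight μ
  rw [hF μ, hshift.integrable_map_iff, hshift.integral_map]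
  simp only [Function.comp_def, hK]
  refine ⟨hint.integral_prod_left.const_mul _, ?_⟩
  rw [integral_const_mul, integral_integral_swap hint,
    setIntegral_congr_fun measurableSet_Ioc fun y hy =>
      integral_two_mul_sin_div_eq_of_integral_cexp hchar hr₀ne hy.1.ne' t μ,
    intervalIntegral_div_self_eq_comp_mul _ ht.ne', intervalIntegral.integral_of_le zero_le_one,
    ← integral_const_mul, ← integral_const_mul]
  congr 1 with y
  ring

/-- For a Type I location-shift family with finite first moment, differentiable CDF and
differentiable characteristic function modulus `r₀` satisfying the integrability condition
`∫₀ᵗ (1/y) ∫_{−1}^{1} |(d/ds)(1/r₀(ys))| ds dy < ∞`, the one-sided matching function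
`K₁(t, x) = (1/(2π)) ∫₀¹ ∫_{−1}^{1} [ (sin(ytsx)/y) ∂ₛ(1/r₀(tys)) + t x cos(tysx)/r₀(tys) ] ds dy`
is `F_μ`-integrable with `∫ K₁(t, x) dF_μ(x) = (1/π) ∫₀ᵗ sin(μy)/y dy` for every `t > 0`. -/
theorem integral_matching_one_sided_null
    (P₀ : Measure ℝ) [IsProbabilityMeasure P₀]
    (r₀ : ℝ → ℝ) (hr₀pos : ∀ t : ℝ, 0 < r₀ t)
    (hchar : ∀ t : ℝ,
      (∫ x, Complex.exp (Complex.I * (t : ℂ) * (x : ℂ)) ∂P₀) = ((r₀ t : ℝ) : ℂ))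
    (F : ℝ → Measure ℝ) (hF : ∀ μ : ℝ, F μ = Measure.map (fun x => x + μ) P₀)
    (hP₀1 : Integrable (fun x : ℝ => x) P₀)
    (hcdf : Differentiable ℝ (fun x : ℝ => (P₀ (Set.Iic x)).toReal))
    (hr₀diff : Differentiable ℝ r₀)
    (hcond : ∀ t : ℝ, 0 < t →
      (∫⁻ y in Set.Ioc (0:ℝ) t,
        ∫⁻ s in Set.Icc (-1:ℝ) 1,
          ENNReal.ofReal ((1 / y) * |deriv (fun s' : ℝ => 1 / r₀ (y * s')) s|)) < ⊤)
    (K₁ : ℝ → ℝ → ℝ)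
    (hK₁ : ∀ t x, K₁ t x =
      (1 / (2 * π)) * ∫ y in (0:ℝ)..1, ∫ s in (-1:ℝ)..1,
        (Real.sin (y * t * s * x) / y) * deriv (fun s' : ℝ => 1 / r₀ (t * y * s')) s +
          t * x * Real.cos (t * y * s * x) / r₀ (t * y * s)) :
    ∀ (μ : ℝ) (t : ℝ), 0 < t →
      Integrable (fun x => K₁ t x) (F μ) ∧
      (∫ x, K₁ t x ∂(F μ)) = (1 / π) * ∫ y in (0:ℝ)..t, Real.sin (μ * y) / y :=
  integral_matching_one_sided_null_general P₀ r₀ hr₀pos hchar F hF hP₀1 hr₀diff hcond K₁ hK₁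
end

section
/- Let φ be continuous and of bounded variation on [a, b]. Define K₁(t, x) = (t/(2π)) ∫_a^b φ(y) ( ∫_{−1}^{1} cos(t·s·(x−y))/r₀(t·s) ds ) dy. Then for every t ∈ ℝ and every μ ∈ ℝ, the function x ↦ K₁(t, x) is integrable with respect to F_μ and ∫ K₁(t, x) dF_μ(x) = (1/π) ∫_a^b ( sin((μ−y)·t)/(μ−y) )·φ(y) dy. -/
/-!
Because `r₀` is the real characteristic function of `P₀`, integrating a cosine against the
shifted law gives `∫ cos (τ (x - d)) dF_μ(x) = cos (τ (μ - d)) r₀ τ`. Integrating `K₁ t` in `x`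
first therefore cancels the factor `1 / r₀ (t s)` and leaves
`(t / 2π) ∫ φ(y) ∫_{-1}^{1} cos (t s (μ - y)) ds dy`, whose inner integral is `2 sinc (t (μ - y))`.
Both exchanges of integrals are justified because `r₀` is continuous and positive, hence
bounded below on the compact range `{t s | s ∈ [-1, 1]}`, so all kernels are continuous and
bounded and the measures are finite.
-/

open MeasureTheory Real Set
open scoped Interval
open Complex (I)

section FubiniInterval

variable {X E : Type*} [TopologicalSpace X] [MeasurableSpace X] [OpensMeasurableSpace X]
  [SecondCountableTopology X] [NormedAddCommGroup E] [NormedSpace ℝ E]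
  {ν : Measure X} [IsFiniteMeasure ν] {f : X → ℝ → E} {a b C : ℝ}

lemma integrable_intervalIntegral_of_continuous (hf : Continuous (Function.uncurry f))
    (hC : ∀ x, ∀ y ∈ Ι a b, ‖f x y‖ ≤ C) :
    Integrable (fun x => ∫ y in a..b, f x y) ν :=
  .of_bound (intervalIntegral.continuous_parametric_intervalIntegral_of_continuous' hf a b
    |>.aestronglyMeasurable) (C * |b - a|)
    (ae_of_all _ fun x => intervalIntegral.norm_integral_le_of_norm_le_const (hC x))

lemma integral_intervalIntegral_comm_of_continuous [CompleteSpace E]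
    (hf : Continuous (Function.uncurry f)) (hC : ∀ x, ∀ y ∈ Ι a b, ‖f x y‖ ≤ C) :
    ∫ x, (∫ y in a..b, f x y) ∂ν = ∫ y in a..b, ∫ x, f x y ∂ν := by
  have : IsFiniteMeasure (volume.restrict (Ι a b)) :=
    isFiniteMeasure_restrict.mpr (by simp)
  refine (intervalIntegral_integral_swap (.of_bound ?_ C ?_)).symm
  · exact (hf.comp continuous_swap).aestronglyMeasurable
  · exact Measure.quasiMeasurePreserving_fst.ae (ae_restrict_mem measurableSet_uIoc)
      |>.mono fun p hp => hC p.2 p.1 hp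

end FubiniInterval

section CharacteristicFunction

variable {P : Measure ℝ} [IsFiniteMeasure P]

lemma integral_cos_mul_add_of_integral_cexp_eq {τ r : ℝ}
    (h : ∫ x, Complex.exp (I * τ * x) ∂P = r) (d : ℝ) :
    ∫ x, cos (τ * (x + d)) ∂P = cos (τ * d) * r := by
  have hint : Integrable (fun x : ℝ => Complex.exp (I * τ * x)) P :=
    .of_bound (by fun_prop) 1 (ae_of_all _ fun x => by
      rw [show I * τ * x = ((τ * x : ℝ) : ℂ) * I by push_cast; ring, Complex.norm_exp_ofReal_mul_I])
  calc ∫ x, cos (τ * (x + d)) ∂P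
      = (∫ x, Complex.exp ((τ * d : ℝ) * I) * Complex.exp (I * τ * x) ∂P).re := by
        rw [← RCLike.re_to_complex, ← integral_re (hint.const_mul _)]
        congr 1 with x
        rw [RCLike.re_to_complex, ← Complex.exp_add, ← Complex.exp_ofReal_mul_I_re]
        push_cast
        ring_nf
    _ = cos (τ * d) * r := by
      rw [integral_const_mul, h, Complex.re_mul_ofReal, Complex.exp_ofReal_mul_I_re]

lemma continuous_of_integral_cexp_eq_s11 {r : ℝ → ℝ}
    (h : ∀ τ : ℝ, ∫ x, Complex.exp (I * τ * x) ∂P = r τ) : Continuous r := by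
  have hr : r = fun τ => (charFun P τ).re := by
    ext τ
    simp_rw [charFun_apply_real, mul_right_comm _ _ I, mul_comm _ I, h τ, Complex.ofReal_re]
  rw [hr]
  fun_prop

end CharacteristicFunction

lemma integral_cos_mul_neg_one_one (c : ℝ) : ∫ s in (-1 : ℝ)..1, cos (c * s) = 2 * sinc c := by
  rcases eq_or_ne c 0 with rfl | hc
  · norm_num
  · rw [intervalIntegral.integral_comp_mul_left (fun v => cos v) hc, integral_cos,
      sinc_of_ne_zero hc, smul_eq_mul, mul_neg_one, mul_one, sin_neg]
    ring

lemma sin_mul_div_eq_mul_sinc (t : ℝ) {u : ℝ} (hu : u ≠ 0) :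
    sin (u * t) / u = t * sinc (t * u) := by
  rcases eq_or_ne t 0 with rfl | ht
  · simp
  · rw [sinc_of_ne_zero (mul_ne_zero ht hu), mul_comm u]
    field_simp

lemma ContinuousOn.exists_continuous_bounded_eqOn_Icc {E : Type*} [NormedAddCommGroup E]
    {φ : ℝ → E} {a b : ℝ} (hab : a ≤ b) (hφ : ContinuousOn φ (Icc a b)) :
    ∃ ψ : ℝ → E, Continuous ψ ∧ (∃ M, ∀ y, ‖ψ y‖ ≤ M) ∧ EqOn ψ φ (Icc a b) := by
  obtain ⟨M, hM⟩ := isCompact_Icc.exists_bound_of_continuousOn hφ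
  exact ⟨IccExtend hab ((Icc a b).domRestrict φ), continuous_IccExtend_iff.mpr hφ.domRestrict,
    ⟨M, fun y => hM _ (Subtype.prop _)⟩, fun y hy => IccExtend_of_mem hab _ hy⟩

noncomputable def deconvolutionKernel (r₀ : ℝ → ℝ) (t u : ℝ) : ℝ :=
  ∫ s in (-1 : ℝ)..1, cos (t * s * u) / r₀ (t * s)

section DeconvolutionKernel

variable {r₀ : ℝ → ℝ} (hr₀ : Continuous r₀) (hr₀pos : ∀ τ, 0 < r₀ τ) (t : ℝ)
include hr₀ hr₀pos

lemma exists_bound_cos_div : ∃ B, ∀ u, ∀ s ∈ Ι (-1 : ℝ) 1, ‖cos (t * s * u) / r₀ (t * s)‖ ≤ B := by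
  obtain ⟨B, hB⟩ := (isCompact_Icc : IsCompact (Icc (-1 : ℝ) 1)).exists_bound_of_continuousOn
    ((hr₀.comp (continuous_const_mul t)).inv₀ fun s => (hr₀pos _).ne').continuousOn
  refine ⟨B, fun u s hs => ?_⟩
  calc ‖cos (t * s * u) / r₀ (t * s)‖ = ‖cos (t * s * u)‖ * ‖(r₀ (t * s))⁻¹‖ := by
        rw [div_eq_mul_inv, norm_mul]
    _ ≤ ‖(r₀ (t * s))⁻¹‖ := mul_le_of_le_one_left (norm_nonneg _) (abs_cos_le_one _)
    _ ≤ B := hB s (by simpa using uIoc_subset_uIcc hs)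

lemma continuous_deconvolutionKernel : Continuous (deconvolutionKernel r₀ t) := by
  have : Continuous (Function.uncurry fun u s => cos (t * s * u) / r₀ (t * s)) :=
    .div (by fun_prop) (by fun_prop) fun _ => (hr₀pos _).ne'
  exact intervalIntegral.continuous_parametric_intervalIntegral_of_continuous' this _ _

lemma exists_bound_deconvolutionKernel : ∃ C, ∀ u, ‖deconvolutionKernel r₀ t u‖ ≤ C := by
  obtain ⟨B, hB⟩ := exists_bound_cos_div hr₀ hr₀pos t
  exact ⟨B * |1 - (-1)|, fun u => intervalIntegral.norm_integral_le_of_norm_le_const (hB u)⟩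

lemma integral_deconvolutionKernel_sub {P₀ : Measure ℝ} [IsProbabilityMeasure P₀]
    (hchar : ∀ τ : ℝ, ∫ x, Complex.exp (I * τ * x) ∂P₀ = r₀ τ) (μ y : ℝ) :
    ∫ x, deconvolutionKernel r₀ t (x - y) ∂(P₀.map (· + μ)) = 2 * sinc (t * (μ - y)) := by
  obtain ⟨B, hB⟩ := exists_bound_cos_div hr₀ hr₀pos t
  have hcont : Continuous (Function.uncurry fun x s => cos (t * s * (x - y)) / r₀ (t * s)) :=
    .div (by fun_prop) (by fun_prop) fun _ => (hr₀pos _).ne'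
  rw [← integral_cos_mul_neg_one_one]
  unfold deconvolutionKernel
  rw [integral_intervalIntegral_comm_of_continuous hcont fun x => hB (x - y)]
  refine intervalIntegral.integral_congr fun s _ => ?_
  rw [integral_map (by fun_prop) (by fun_prop), integral_div]
  simp_rw [add_sub_assoc, integral_cos_mul_add_of_integral_cexp_eq (hchar (t * s)),
    mul_div_cancel_right₀ _ (hr₀pos _).ne']
  ring_nf

end DeconvolutionKernel

theorem integral_matching_extension_general
    (P₀ : Measure ℝ) [IsProbabilityMeasure P₀]
    (r₀ : ℝ → ℝ) (hr₀pos : ∀ t : ℝ, 0 < r₀ t)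
    (hchar : ∀ t : ℝ,
      (∫ x, Complex.exp (Complex.I * (t : ℂ) * (x : ℂ)) ∂P₀) = ((r₀ t : ℝ) : ℂ))
    (F : ℝ → Measure ℝ) (hF : ∀ μ : ℝ, F μ = Measure.map (fun x => x + μ) P₀)
    (a b : ℝ) (hab : a < b)
    (φ : ℝ → ℝ) (hφcont : ContinuousOn φ (Set.Icc a b))
    (K₁ : ℝ → ℝ → ℝ)
    (hK₁ : ∀ t x, K₁ t x =
      (t / (2 * π)) *
        ∫ y in a..b, φ y * ∫ s in (-1:ℝ)..1, Real.cos (t * s * (x - y)) / r₀ (t * s)) :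
    ∀ t μ : ℝ,
      Integrable (fun x => K₁ t x) (F μ) ∧
      (∫ x, K₁ t x ∂(F μ)) =
        (1 / π) * ∫ y in a..b, Real.sin ((μ - y) * t) / (μ - y) * φ y := by
  intro t μ
  have hr₀ := continuous_of_integral_cexp_eq_s11 hchar
  obtain ⟨C, hC⟩ := exists_bound_deconvolutionKernel hr₀ hr₀pos t
  have hDcont := continuous_deconvolutionKernel hr₀ hr₀pos t
  obtain ⟨ψ, hψ, ⟨M, hM⟩, hψφ⟩ := hφcont.exists_continuous_bounded_eqOn_Icc hab.le
  have hφψ : ∀ y ∈ [[a, b]], φ y = ψ y := fun y hy =>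
    (hψφ (by rwa [uIcc_of_le hab.le] at hy)).symm
  have hK : K₁ t = fun x => t / (2 * π) * ∫ y in a..b, ψ y * deconvolutionKernel r₀ t (x - y) := by
    ext x
    rw [hK₁]
    congr 1
    exact intervalIntegral.integral_congr fun y hy => by rw [hφψ y hy, deconvolutionKernel]
  have hcont : Continuous (Function.uncurry fun x y => ψ y * deconvolutionKernel r₀ t (x - y)) :=
    by fun_prop
  have hbound : ∀ x, ∀ y ∈ Ι a b, ‖ψ y * deconvolutionKernel r₀ t (x - y)‖ ≤ M * C :=
    fun x y _ => by
      rw [norm_mul]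
      exact mul_le_mul (hM y) (hC _) (norm_nonneg _) ((norm_nonneg _).trans (hM 0))
  rw [hK, hF]
  refine ⟨(integrable_intervalIntegral_of_continuous hcont hbound).const_mul _, ?_⟩
  rw [integral_const_mul, integral_intervalIntegral_comm_of_continuous hcont hbound]
  simp_rw [integral_const_mul, integral_deconvolutionKernel_sub hr₀ hr₀pos t hchar]
  rw [← intervalIntegral.integral_const_mul, ← intervalIntegral.integral_const_mul]
  -- At `y = μ` the right-hand integrand is the junk value `sin 0 / 0 = 0`, not `t`.
  refine intervalIntegral.integral_congr_ae ?_
  filter_upwards [compl_mem_ae_iff.mpr (measure_singleton μ)] with y hyμ hy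
  rw [hφψ y (uIoc_subset_uIcc hy), sin_mul_div_eq_mul_sinc t (sub_ne_zero.mpr (Ne.symm hyμ))]
  field_simp

/-- For a Type I location-shift family and `φ` continuous and of bounded variation on `[a, b]`,
the matching function `K₁(t, x) = (t/(2π)) ∫_a^b φ(y) ( ∫_{−1}^{1} cos(ts(x−y))/r₀(ts) ds ) dy`
is `F_μ`-integrable with
`∫ K₁(t, x) dF_μ(x) = (1/π) ∫_a^b ( sin((μ−y)t)/(μ−y) ) φ(y) dy`. -/
theorem integral_matching_extension
    (P₀ : Measure ℝ) [IsProbabilityMeasure P₀]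
    (r₀ : ℝ → ℝ) (hr₀pos : ∀ t : ℝ, 0 < r₀ t)
    (hchar : ∀ t : ℝ,
      (∫ x, Complex.exp (Complex.I * (t : ℂ) * (x : ℂ)) ∂P₀) = ((r₀ t : ℝ) : ℂ))
    (F : ℝ → Measure ℝ) (hF : ∀ μ : ℝ, F μ = Measure.map (fun x => x + μ) P₀)
    (a b : ℝ) (hab : a < b)
    (φ : ℝ → ℝ) (hφcont : ContinuousOn φ (Set.Icc a b))
    (hφBV : BoundedVariationOn φ (Set.Icc a b))
    (K₁ : ℝ → ℝ → ℝ)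
    (hK₁ : ∀ t x, K₁ t x =
      (t / (2 * π)) *
        ∫ y in a..b, φ y * ∫ s in (-1:ℝ)..1, Real.cos (t * s * (x - y)) / r₀ (t * s)) :
    ∀ t μ : ℝ,
      Integrable (fun x => K₁ t x) (F μ) ∧
      (∫ x, K₁ t x ∂(F μ)) =
        (1 / π) * ∫ y in a..b, Real.sin ((μ - y) * t) / (μ - y) * φ y :=
  integral_matching_extension_general P₀ r₀ hr₀pos hchar F hF a b hab φ hφcont K₁ hK₁
end

section
/- Assume ∫ x² dP₀(x) < ∞ and let φ be continuous and of bounded variation on [a, b], with supremum norm ‖φ‖_∞ over [a, b]. Let μ₁,…,μ_m ∈ ℝ, let z₁,…,z_m be independent random variables with z_i distributed according to F_{μ_i}, and set e_{1,m}(t) = (1/m) Σ_{i=1}^m ( K₁(t, z_i) − E[K₁(t, z_i)] ). Then for every t ∈ ℝ and m ≥ 1, Var(e_{1,m}(t)) ≤ π^{−2}·(1/m)·t²·(b−a)²·‖φ‖_∞²·g(t)². -/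
open MeasureTheory ProbabilityTheory Real Set

/-!
Each summand `K₁(t, z_i) - ∫ K₁(t, ·) dF_{μ_i}` is a random variable with values in an
interval of length `2B`, where `B = |t|/(2π) · ‖φ‖_∞ · g(t) · (b - a)` bounds `|K₁(t, ·)|` because
`|cos| ≤ 1` and `r₀ > 0`. Popoviciu's inequality bounds the variance of each summand by `B²`,
independence makes the variances add up, and the normalisation `1/m` gives `B²/m`, which is a
quarter of the claimed bound.
-/

lemma continuous_of_integral_cexp_eq_ofReal {μ : Measure ℝ} [IsFiniteMeasure μ] {r : ℝ → ℝ}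
    (h : ∀ t : ℝ, ∫ x, Complex.exp (Complex.I * t * x) ∂μ = r t) : Continuous r := by
  have hr : r = fun t => (charFun μ t).re := funext fun t => by
    simp only [charFun_apply_real, mul_comm _ Complex.I, ← mul_assoc, h, Complex.ofReal_re]
  rw [hr]
  exact Complex.continuous_re.comp continuous_charFun

lemma abs_le_ciSup_abs_of_continuousOn {a b : ℝ} {φ : ℝ → ℝ} (hφ : ContinuousOn φ (Icc a b))
    {y : ℝ} (hy : y ∈ Icc a b) : |φ y| ≤ ⨆ z : Icc a b, |φ z| := by
  have hbdd : BddAbove (range fun z : Icc a b => |φ z|) := by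
    simpa only [image_eq_range] using isCompact_Icc.bddAbove_image hφ.abs
  exact le_ciSup hbdd ⟨y, hy⟩

section Convolution

variable {a b : ℝ} {φ H : ℝ → ℝ}

lemma continuous_intervalIntegral_mul_comp_sub (hab : a ≤ b) (hφ : ContinuousOn φ (Icc a b))
    (hH : Continuous H) : Continuous fun x => ∫ y in a..b, φ y * H (x - y) := by
  set ψ := IccExtend hab ((Icc a b).domRestrict φ)
  have hψ : Continuous ψ := hφ.domRestrict.Icc_extend'
  have hφψ : ∀ x, ∫ y in a..b, φ y * H (x - y) = ∫ y in a..b, ψ y * H (x - y) := fun x =>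
    intervalIntegral.integral_congr fun y hy => by
      rw [uIcc_of_le hab] at hy
      simp only [ψ, IccExtend_of_mem _ _ hy, domRestrict_apply]
  simp_rw [hφψ]
  exact intervalIntegral.continuous_parametric_intervalIntegral_of_continuous' (by fun_prop) a b

lemma abs_intervalIntegral_mul_comp_sub_le (hab : a ≤ b) {M G : ℝ}
    (hφ : ∀ y ∈ Icc a b, |φ y| ≤ M) (hH : ∀ u, |H u| ≤ G) (x : ℝ) :
    |∫ y in a..b, φ y * H (x - y)| ≤ M * G * (b - a) := by
  have := intervalIntegral.norm_integral_le_of_norm_le_const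
    (f := fun y => φ y * H (x - y)) (C := M * G) fun y hy => by
      rw [uIoc_of_le hab] at hy
      have hφy := hφ y (Ioc_subset_Icc_self hy)
      rw [Real.norm_eq_abs, abs_mul]
      exact mul_le_mul hφy (hH _) (abs_nonneg _) ((abs_nonneg _).trans hφy)
  rwa [Real.norm_eq_abs, abs_of_nonneg (sub_nonneg.mpr hab)] at this

end Convolution

/-- The inner integral of `K₁`: `K₁(t, x) = t/(2π) ∫_a^b φ(y) cosKernel r₀ t (x - y) dy`. -/
noncomputable def cosKernel (r : ℝ → ℝ) (t u : ℝ) : ℝ :=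
  ∫ s in (-1 : ℝ)..1, cos (t * s * u) / r (t * s)

section CosKernel

variable {r : ℝ → ℝ}

lemma continuous_cosKernel (hr : Continuous r) (hr_ne : ∀ u, r u ≠ 0) (t : ℝ) :
    Continuous (cosKernel r t) :=
  intervalIntegral.continuous_parametric_intervalIntegral_of_continuous'
    ((by fun_prop : Continuous fun p : ℝ × ℝ => cos (t * p.2 * p.1)).div
      (by fun_prop) fun _ => hr_ne _) _ _

lemma abs_cosKernel_le (hr : Continuous r) (hr_pos : ∀ u, 0 < r u) (t u : ℝ) :
    |cosKernel r t u| ≤ ∫ s in (-1 : ℝ)..1, 1 / r (t * s) := by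
  have hrt : Continuous fun s => r (t * s) := by fun_prop
  calc |cosKernel r t u|
      ≤ ∫ s in (-1 : ℝ)..1, |cos (t * s * u) / r (t * s)| :=
        intervalIntegral.abs_integral_le_integral_abs (by norm_num)
    _ ≤ ∫ s in (-1 : ℝ)..1, 1 / r (t * s) := by
        refine intervalIntegral.integral_mono_on (by norm_num) ?_ ?_ fun s _ => ?_
        · exact ((by fun_prop : Continuous fun s => cos (t * s * u)).div hrt
            fun _ => (hr_pos _).ne').abs.intervalIntegrable _ _
        · exact (continuous_const.div hrt fun _ => (hr_pos _).ne').intervalIntegrable _ _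
        · rw [abs_div, abs_of_pos (hr_pos _)]
          exact div_le_div_of_nonneg_right (abs_cos_le_one _) (hr_pos _).le

end CosKernel

lemma variance_sum_sub_le_of_abs_le {Ω ι : Type*} [MeasurableSpace Ω] {P : Measure Ω}
    [IsProbabilityMeasure P] [Fintype ι] {z : ι → Ω → ℝ} (hz : ∀ i, Measurable (z i))
    (hindep : iIndepFun z P) {f : ℝ → ℝ} (hf : Measurable f) {B : ℝ} (hB : ∀ x, |f x| ≤ B)
    (c : ι → ℝ) :
    variance (∑ i, fun ω => f (z i ω) - c i) P ≤ Fintype.card ι * B ^ 2 := by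
  have hmeas : ∀ i, Measurable fun ω => f (z i ω) - c i := fun i =>
    (hf.comp (hz i)).sub_const _
  have hmem : ∀ i, MemLp (fun ω => f (z i ω) - c i) 2 P := fun i =>
    MemLp.of_bound (hmeas i).aestronglyMeasurable (B + |c i|) <| .of_forall fun ω =>
      (norm_sub_le _ _).trans (add_le_add_left (hB _) _)
  have hpair : Set.Pairwise (Finset.univ : Finset ι)
      fun i j => IndepFun (fun ω => f (z i ω) - c i) (fun ω => f (z j ω) - c j) P :=
    fun i _ j _ hij => (hindep.indepFun hij).comp (hf.sub_const _) (hf.sub_const _)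
  -- Popoviciu: each summand lies in `[-B - c i, B - c i]`.
  have hvar : ∀ i, variance (fun ω => f (z i ω) - c i) P ≤ B ^ 2 := fun i => by
    refine (variance_le_sq_of_bounded (a := -B - c i) (b := B - c i) (.of_forall fun ω => ?_)
      (hmeas i).aemeasurable).trans_eq (by ring)
    obtain ⟨hlo, hhi⟩ := abs_le.mp (hB (z i ω))
    constructor <;> linarith
  rw [IndepFun.variance_sum (fun i _ => hmem i) hpair]
  refine (Finset.sum_le_card_nsmul _ _ _ fun i _ => hvar i).trans_eq ?_
  rw [nsmul_eq_mul, Finset.card_univ]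

theorem variance_bound_extension_K1_general
    (P₀ : Measure ℝ) [IsProbabilityMeasure P₀]
    (r₀ : ℝ → ℝ) (hr₀pos : ∀ t : ℝ, 0 < r₀ t)
    (hchar : ∀ t : ℝ,
      (∫ x, Complex.exp (Complex.I * (t : ℂ) * (x : ℂ)) ∂P₀) = ((r₀ t : ℝ) : ℂ))
    (F : ℝ → Measure ℝ)
    (a b : ℝ) (hab : a < b)
    (φ : ℝ → ℝ) (hφcont : ContinuousOn φ (Set.Icc a b))
    (K₁ : ℝ → ℝ → ℝ)
    (hK₁ : ∀ t x, K₁ t x =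
      (t / (2 * π)) *
        ∫ y in a..b, φ y * ∫ s in (-1:ℝ)..1, Real.cos (t * s * (x - y)) / r₀ (t * s))
    (g : ℝ → ℝ) (hg : ∀ t, g t = ∫ s in (-1:ℝ)..1, 1 / r₀ (t * s))
    {Ω : Type*} [MeasurableSpace Ω] (P : Measure Ω) [IsProbabilityMeasure P]
    (m : ℕ)
    (μs : Fin m → ℝ) (z : Fin m → Ω → ℝ)
    (hzmeas : ∀ i, Measurable (z i))
    (hindep : iIndepFun z P)
    (e1m : ℝ → Ω → ℝ)
    (he1m : ∀ t ω', e1m t ω' =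
      (1 / (m : ℝ)) * ∑ i, (K₁ t (z i ω') - ∫ x, K₁ t x ∂(F (μs i)))) :
    ∀ t : ℝ,
      variance (e1m t) P ≤
        (π ^ 2)⁻¹ * (1 / (m : ℝ)) * t ^ 2 * (b - a) ^ 2 *
          (⨆ y : Set.Icc a b, |φ ↑y|) ^ 2 * (g t) ^ 2 := by
  intro t
  have hr₀ : Continuous r₀ := continuous_of_integral_cexp_eq_ofReal hchar
  set M := ⨆ y : Set.Icc a b, |φ ↑y|
  set B := |t| / (2 * π) * (M * g t * (b - a))
  have hK : K₁ t = fun x => t / (2 * π) * ∫ y in a..b, φ y * cosKernel r₀ t (x - y) :=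
    funext (hK₁ t)
  have hK_cont : Continuous (K₁ t) := hK ▸ continuous_const.mul
    (continuous_intervalIntegral_mul_comp_sub hab.le hφcont
      (continuous_cosKernel hr₀ (fun u => (hr₀pos u).ne') t))
  have hK_bound : ∀ x, |K₁ t x| ≤ B := fun x => by
    rw [hK, abs_mul, abs_div, abs_of_pos (by positivity : 0 < 2 * π)]
    exact mul_le_mul_of_nonneg_left (abs_intervalIntegral_mul_comp_sub_le hab.le
      (fun y hy => abs_le_ciSup_abs_of_continuousOn hφcont hy)
      (fun u => (abs_cosKernel_le hr₀ hr₀pos t u).trans_eq (hg t).symm) x) (by positivity)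
  have he : e1m t = (1 / (m : ℝ)) • ∑ i, fun ω => K₁ t (z i ω) - ∫ x, K₁ t x ∂F (μs i) :=
    funext fun ω => by simp [he1m, Finset.sum_apply]
  have hvar := variance_sum_sub_le_of_abs_le hzmeas hindep hK_cont.measurable hK_bound
    fun i => ∫ x, K₁ t x ∂F (μs i)
  rw [Fintype.card_fin] at hvar
  calc variance (e1m t) P ≤ (1 / (m : ℝ)) ^ 2 * (m * B ^ 2) := by
        rw [he, variance_smul]
        gcongr
    _ = (1 / m) * (2 * B) ^ 2 / 4 := by
        rcases eq_or_ne (m : ℝ) 0 with hm | hm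
        · simp [hm]
        · field_simp
          ring
    _ ≤ (1 / m) * (2 * B) ^ 2 := by
        have : 0 ≤ (1 / (m : ℝ)) * (2 * B) ^ 2 := by positivity
        linarith
    _ = _ := by
        simp only [B, mul_pow, div_pow, sq_abs]
        field_simp

/-- Variance bound for the error of the estimator built from `K₁` alone (extension for a bounded
null): `Var(e_{1,m}(t)) ≤ π⁻² (1/m) t² (b−a)² ‖φ‖_∞² g(t)²`. -/
theorem variance_bound_extension_K1
    (P₀ : Measure ℝ) [IsProbabilityMeasure P₀]
    (r₀ : ℝ → ℝ) (hr₀pos : ∀ t : ℝ, 0 < r₀ t)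
    (hchar : ∀ t : ℝ,
      (∫ x, Complex.exp (Complex.I * (t : ℂ) * (x : ℂ)) ∂P₀) = ((r₀ t : ℝ) : ℂ))
    (hP₀2 : Integrable (fun x : ℝ => x ^ 2) P₀)
    (F : ℝ → Measure ℝ) (hF : ∀ μ : ℝ, F μ = Measure.map (fun x => x + μ) P₀)
    (a b : ℝ) (hab : a < b)
    (φ : ℝ → ℝ) (hφcont : ContinuousOn φ (Set.Icc a b))
    (hφBV : BoundedVariationOn φ (Set.Icc a b))
    (K₁ : ℝ → ℝ → ℝ)
    (hK₁ : ∀ t x, K₁ t x =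
      (t / (2 * π)) *
        ∫ y in a..b, φ y * ∫ s in (-1:ℝ)..1, Real.cos (t * s * (x - y)) / r₀ (t * s))
    (g : ℝ → ℝ) (hg : ∀ t, g t = ∫ s in (-1:ℝ)..1, 1 / r₀ (t * s))
    {Ω : Type*} [MeasurableSpace Ω] (P : Measure Ω) [IsProbabilityMeasure P]
    (m : ℕ) (hm : 1 ≤ m)
    (μs : Fin m → ℝ) (z : Fin m → Ω → ℝ)
    (hzmeas : ∀ i, Measurable (z i))
    (hindep : iIndepFun z P)
    (hlaw : ∀ i, Measure.map (z i) P = F (μs i))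
    (e1m : ℝ → Ω → ℝ)
    (he1m : ∀ t ω', e1m t ω' =
      (1 / (m : ℝ)) * ∑ i, (K₁ t (z i ω') - ∫ x, K₁ t x ∂(F (μs i)))) :
    ∀ t : ℝ,
      variance (e1m t) P ≤
        (π ^ 2)⁻¹ * (1 / (m : ℝ)) * t ^ 2 * (b - a) ^ 2 *
          (⨆ y : Set.Icc a b, |φ ↑y|) ^ 2 * (g t) ^ 2 :=
  variance_bound_extension_K1_general P₀ r₀ hr₀pos hchar F a b hab φ hφcont K₁ hK₁ g hg P m μs z
    hzmeas hindep e1m he1m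
end

section
/- Let X₁,…,X_m be i.i.d. real random variables with common law P₀ satisfying E[X₁²] < ∞, let μ₁,…,μ_m ∈ ℝ with (1/m) Σ_{i=1}^m |μ_i| ≤ ρ, and set z_i = μ_i + X_i. Fix c₀ ∈ ℝ, c₁ > 0 and c₂ < c₃, and define 𝔾_m(v, y) = (1/m) Σ_{i=1}^m ( cos(v·(z_i − y) − c₀) − E[cos(v·(z_i − y) − c₀)] ). Let Δ₁ > 0, Δ₂ > 0 and κ₁ > κ₂ > 0, set R₁ = 2·E[|X₁|] + 2·max(|c₂|, |c₃|) + 2ρ, and assume κ₂/max(Δ₁, Δ₂) − (2c₁ + R₁) > 0. Then P( sup_{(v,y) ∈ [0,c₁]×[c₂,c₃]} |𝔾_m(v, y)| ≥ κ₁ ) ≤ 2·(c₁/Δ₁ + 1)·((c₃−c₂)/Δ₂ + 1)·exp(−m·(κ₁−κ₂)²/2) + Var(|X₁|) / ( m·( κ₂/max(Δ₁, Δ₂) − (2c₁ + R₁) )² ). -/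
/-!
Cover `[0, c₁] × [c₂, c₃]` by a grid of mesh `(Δ₁, Δ₂)` with at most
`(c₁ / Δ₁ + 1) ((c₃ - c₂) / Δ₂ + 1)` points. At a fixed grid point `𝔾_m` is an average of `m`
independent centered variables with values in `[-1, 1]`, so by Hoeffding it exceeds `κ₁ - κ₂`
with probability at most `2 exp (-m (κ₁ - κ₂)² / 2)`. Since `cos` is 1-Lipschitz, moving `(v, y)`
by at most `(Δ₁, Δ₂)` changes `𝔾_m` by at most
`Δ₁ (2 E|X₁| + 2 max(|c₂|, |c₃|) + 2ρ + s) + 2 c₁ Δ₂ ≤ κ₂` as long as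
`(1/m) Σ |X_i| ≤ E|X₁| + s`, where `s = κ₂ / max(Δ₁, Δ₂) - (2 c₁ + R₁)`; by Chebyshev this fails
with probability at most `Var |X₁| / (m s²)`.
-/

open MeasureTheory ProbabilityTheory Real Set

section Hoeffding

variable {Ω ι : Type*} [MeasurableSpace Ω] {μ : Measure Ω} [IsProbabilityMeasure μ] [Fintype ι]
  {W : ι → Ω → ℝ}

lemma hasSubgaussianMGF_sum_sub_integral_of_abs_le_one (hW : ∀ i, Measurable (W i))
    (hb : ∀ i ω, |W i ω| ≤ 1) (hind : iIndepFun W μ) :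
    HasSubgaussianMGF (fun ω ↦ ∑ i, (W i ω - μ[W i])) (Fintype.card ι) μ := by
  have hcenter : iIndepFun (fun i ω ↦ W i ω - μ[W i]) μ := by
    have := hind.comp (fun i (x : ℝ) ↦ x - μ[W i]) fun i ↦ measurable_id.sub_const _
    exact this
  have hsub (i : ι) : HasSubgaussianMGF (fun ω ↦ W i ω - μ[W i]) 1 μ := by
    have := hasSubgaussianMGF_of_mem_Icc (μ := μ) (hW i).aemeasurable
      (ae_of_all _ fun ω ↦ abs_le.1 (hb i ω))
    norm_num at this
    exact this
  simpa using HasSubgaussianMGF.sum_of_iIndepFun hcenter (s := Finset.univ) fun i _ ↦ hsub i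

lemma measure_le_abs_sum_sub_integral_le (hW : ∀ i, Measurable (W i))
    (hb : ∀ i ω, |W i ω| ≤ 1) (hind : iIndepFun W μ) {ε : ℝ} (hε : 0 ≤ ε) :
    μ {ω | ε ≤ |∑ i, (W i ω - μ[W i])|} ≤
      ENNReal.ofReal (2 * exp (-ε ^ 2 / (2 * Fintype.card ι))) := by
  have hS := hasSubgaussianMGF_sum_sub_integral_of_abs_le_one hW hb hind
  have hsplit : {ω | ε ≤ |∑ i, (W i ω - μ[W i])|} ⊆
      {ω | ε ≤ ∑ i, (W i ω - μ[W i])} ∪ {ω | ε ≤ (-fun ω ↦ ∑ i, (W i ω - μ[W i])) ω} := by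
    intro ω (hω : ε ≤ |_|)
    rcases le_abs'.1 hω with h | h
    · exact Or.inr (by simp only [mem_ofPred_eq, Pi.neg_apply]; linarith)
    · exact Or.inl h
  rw [← ofReal_measureReal, two_mul]
  refine ENNReal.ofReal_le_ofReal ?_
  calc μ.real _ ≤ μ.real _ := measureReal_mono hsplit
    _ ≤ _ := measureReal_union_le _ _
    _ ≤ _ := add_le_add (hS.measure_ge_le hε) (hS.neg.measure_ge_le hε)

end Hoeffding

section Chebyshev

variable {Ω ι E : Type*} [MeasurableSpace Ω] {μ : Measure Ω} [IsProbabilityMeasure μ] [Fintype ι]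
  [MeasurableSpace E] {X : ι → Ω → E} {P₀ : Measure E} {f : E → ℝ}

lemma measure_le_abs_sum_comp_sub_le (hX : ∀ i, Measurable (X i)) (hind : iIndepFun X μ)
    (hlaw : ∀ i, μ.map (X i) = P₀) (hf : MemLp f 2 P₀) {ε : ℝ} (hε : 0 < ε) :
    μ {ω | ε ≤ |∑ i, f (X i ω) - Fintype.card ι * ∫ x, f x ∂P₀|} ≤
      ENNReal.ofReal (Fintype.card ι * variance f P₀ / ε ^ 2) := by
  have hfmeas (i : ι) : AEMeasurable f (μ.map (X i)) :=
    hlaw i ▸ hf.aestronglyMeasurable.aemeasurable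
  have hfX (i : ι) : MemLp (f ∘ X i) 2 μ := ((hlaw i).symm ▸ hf).comp_of_map (hX i).aemeasurable
  have hmean (i : ι) : ∫ ω, f (X i ω) ∂μ = ∫ x, f x ∂P₀ := by
    rw [← hlaw i, integral_map (hX i).aemeasurable (hfmeas i).aestronglyMeasurable]
  have hvar (i : ι) : variance (f ∘ X i) μ = variance f P₀ := by
    rw [← hlaw i, variance_map (hfmeas i) (hX i).aemeasurable]
  have hindf : iIndepFun (fun i ↦ f ∘ X i) μ :=
    hind.comp₀ (fun _ ↦ f) (fun i ↦ (hX i).aemeasurable) hfmeas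
  have hTmean : μ[∑ i, f ∘ X i] = Fintype.card ι * ∫ x, f x ∂P₀ := by
    simp only [Finset.sum_apply]
    rw [integral_finsetSum _ fun i _ ↦ (hfX i).integrable one_le_two]
    simp [hmean]
  have hTvar : variance (∑ i, f ∘ X i) μ = Fintype.card ι * variance f P₀ := by
    rw [IndepFun.variance_sum (fun i _ ↦ hfX i) fun i _ j _ hij ↦ hindf.indepFun hij]
    simp [hvar]
  have := meas_ge_le_variance_div_sq (memLp_finsetSum' Finset.univ fun i _ ↦ hfX i) hε
  rw [hTmean, hTvar] at this
  simp only [Finset.sum_apply, Function.comp_apply] at this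
  exact this

end Chebyshev

section Grid

noncomputable def gridIcc (a b δ : ℝ) : Finset ℝ :=
  (Finset.range (⌊(b - a) / δ⌋₊ + 1)).image fun k : ℕ ↦ a + k * δ

variable {a b δ : ℝ}

lemma gridIcc_nonempty : (gridIcc a b δ).Nonempty := by
  simp [gridIcc]

lemma gridIcc_subset_Icc (hab : a ≤ b) (hδ : 0 < δ) : ↑(gridIcc a b δ) ⊆ Icc a b := by
  intro p hp
  obtain ⟨k, hk, rfl⟩ := Finset.mem_image.1 hp
  have hk' : (k : ℝ) ≤ (b - a) / δ :=
    (Nat.cast_le.2 (Nat.lt_succ_iff.1 (Finset.mem_range.1 hk))).trans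
      (Nat.floor_le (div_nonneg (sub_nonneg.2 hab) hδ.le))
  rw [le_div_iff₀ hδ] at hk'
  constructor <;> nlinarith [k.cast_nonneg (α := ℝ)]

lemma card_gridIcc_le (hab : a ≤ b) (hδ : 0 < δ) :
    ((gridIcc a b δ).card : ℝ) ≤ (b - a) / δ + 1 := by
  calc ((gridIcc a b δ).card : ℝ) ≤ ⌊(b - a) / δ⌋₊ + 1 := by
        exact_mod_cast Finset.card_image_le.trans (Finset.card_range _).le
    _ ≤ (b - a) / δ + 1 := by
        gcongr; exact Nat.floor_le (div_nonneg (sub_nonneg.2 hab) hδ.le)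

lemma card_gridIcc_product_le {a₁ b₁ δ₁ a₂ b₂ δ₂ : ℝ} (hab₁ : a₁ ≤ b₁) (hab₂ : a₂ ≤ b₂)
    (hδ₁ : 0 < δ₁) (hδ₂ : 0 < δ₂) :
    ((gridIcc a₁ b₁ δ₁ ×ˢ gridIcc a₂ b₂ δ₂).card : ℝ) ≤
      ((b₁ - a₁) / δ₁ + 1) * ((b₂ - a₂) / δ₂ + 1) := by
  rw [Finset.card_product, Nat.cast_mul]
  exact mul_le_mul (card_gridIcc_le hab₁ hδ₁) (card_gridIcc_le hab₂ hδ₂) (by positivity)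
    (by linarith [div_nonneg (sub_nonneg.2 hab₁) hδ₁.le])

lemma exists_mem_gridIcc_abs_sub_le (hδ : 0 < δ) {x : ℝ} (hx : x ∈ Icc a b) :
    ∃ p ∈ gridIcc a b δ, |x - p| ≤ δ := by
  set k := ⌊(x - a) / δ⌋₊
  have hxa : 0 ≤ (x - a) / δ := div_nonneg (sub_nonneg.2 hx.1) hδ.le
  have hlo : (k : ℝ) * δ ≤ x - a := (le_div_iff₀ hδ).1 (Nat.floor_le hxa)
  have hhi : x - a < (k + 1) * δ := (div_lt_iff₀ hδ).1 (Nat.lt_floor_add_one _)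
  refine ⟨a + k * δ, Finset.mem_image.2 ⟨k, Finset.mem_range.2 (Nat.lt_succ_of_le ?_), rfl⟩, ?_⟩
  · exact Nat.floor_le_floor (by gcongr; exact hx.2)
  · rw [abs_le]; constructor <;> linarith

end Grid

lemma biSup_Icc_abs_lt_of_net {g : ℝ → ℝ → ℝ} {a₁ b₁ a₂ b₂ t κ : ℝ} (hκ : 0 ≤ κ)
    {F : Finset (ℝ × ℝ)} (hF : F.Nonempty)
    (hnet : ∀ v ∈ Icc a₁ b₁, ∀ y ∈ Icc a₂ b₂, ∃ p ∈ F, |g v y - g p.1 p.2| ≤ κ)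
    (hlt : ∀ p ∈ F, |g p.1 p.2| < t) :
    ⨆ v ∈ Icc a₁ b₁, ⨆ y ∈ Icc a₂ b₂, |g v y| < t + κ := by
  obtain ⟨p₀, hp₀, hmax⟩ := F.exists_max_image (fun p ↦ |g p.1 p.2|) hF
  have hbound : ∀ v ∈ Icc a₁ b₁, ∀ y ∈ Icc a₂ b₂, |g v y| ≤ |g p₀.1 p₀.2| + κ := by
    intro v hv y hy
    obtain ⟨p, hp, hclose⟩ := hnet v hv y hy
    calc |g v y| ≤ |g p.1 p.2| + |g v y - g p.1 p.2| :=
          sub_le_iff_le_add'.1 (abs_sub_abs_le_abs_sub _ _)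
      _ ≤ |g p₀.1 p₀.2| + κ := add_le_add (hmax p hp) hclose
  have h0 : 0 ≤ |g p₀.1 p₀.2| + κ := by positivity
  calc ⨆ v ∈ Icc a₁ b₁, ⨆ y ∈ Icc a₂ b₂, |g v y| ≤ |g p₀.1 p₀.2| + κ :=
        Real.iSup_le (fun v ↦ Real.iSup_le (fun hv ↦ Real.iSup_le (fun y ↦
          Real.iSup_le (fun hy ↦ hbound v hv y hy) h0) h0) h0) h0
    _ < t + κ := by linarith [hlt p₀ hp₀]

lemma measure_le_biSup_abs_le_of_net {Ω : Type*} [MeasurableSpace Ω] (μ : Measure Ω)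
    {g : Ω → ℝ → ℝ → ℝ} {a₁ b₁ a₂ b₂ κ₁ κ₂ α β : ℝ} (hκ₂ : 0 ≤ κ₂) {B : Set Ω}
    {F : Finset (ℝ × ℝ)} (hF : F.Nonempty)
    (hnet : ∀ ω ∉ B, ∀ v ∈ Icc a₁ b₁, ∀ y ∈ Icc a₂ b₂, ∃ p ∈ F, |g ω v y - g ω p.1 p.2| ≤ κ₂)
    (hα : 0 ≤ α) (hF_le : ∀ p ∈ F, μ {ω | κ₁ - κ₂ ≤ |g ω p.1 p.2|} ≤ ENNReal.ofReal α)
    (hβ : 0 ≤ β) (hB : μ B ≤ ENNReal.ofReal β) :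
    μ {ω | κ₁ ≤ ⨆ v ∈ Icc a₁ b₁, ⨆ y ∈ Icc a₂ b₂, |g ω v y|} ≤
      ENNReal.ofReal (F.card * α + β) := by
  have hsub : {ω | κ₁ ≤ ⨆ v ∈ Icc a₁ b₁, ⨆ y ∈ Icc a₂ b₂, |g ω v y|} ⊆
      (⋃ p ∈ F, {ω | κ₁ - κ₂ ≤ |g ω p.1 p.2|}) ∪ B := by
    intro ω (hω : κ₁ ≤ _)
    by_contra hout
    simp only [mem_union, mem_iUnion, mem_ofPred_eq, not_or, not_exists, not_le] at hout
    have := biSup_Icc_abs_lt_of_net hκ₂ hF (hnet ω hout.2) fun p hp ↦ hout.1 p hp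
    linarith
  calc _ ≤ μ ((⋃ p ∈ F, {ω | κ₁ - κ₂ ≤ |g ω p.1 p.2|}) ∪ B) := measure_mono hsub
    _ ≤ ∑ p ∈ F, μ {ω | κ₁ - κ₂ ≤ |g ω p.1 p.2|} + μ B :=
        (measure_union_le _ _).trans (add_le_add (measure_biUnion_finset_le _ _) le_rfl)
    _ ≤ ∑ _p ∈ F, ENNReal.ofReal α + ENNReal.ofReal β := add_le_add (Finset.sum_le_sum hF_le) hB
    _ = ENNReal.ofReal (F.card * α + β) := by
        rw [Finset.sum_const, nsmul_eq_mul, ← ENNReal.ofReal_natCast,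
          ← ENNReal.ofReal_mul (Nat.cast_nonneg _), ← ENNReal.ofReal_add (by positivity) hβ]

lemma abs_cos_mul_sub_sub_cos_mul_sub_le (c₀ a v v' y y' : ℝ) :
    |cos (v * (a - y) - c₀) - cos (v' * (a - y') - c₀)| ≤
      |v - v'| * (|a| + |y|) + |v'| * |y - y'| :=
  calc |cos (v * (a - y) - c₀) - cos (v' * (a - y') - c₀)|
      ≤ |(v - v') * (a - y) + v' * (y' - y)| := by
        convert abs_cos_sub_cos_le _ _ using 2; ring
    _ ≤ |v - v'| * |a - y| + |v'| * |y - y'| := by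
        rw [abs_sub_comm y y', ← abs_mul, ← abs_mul]; exact abs_add_le _ _
    _ ≤ |v - v'| * (|a| + |y|) + |v'| * |y - y'| := by gcongr; exact abs_sub _ _

lemma abs_sub_integral_sub_sub_integral_le {Ω : Type*} [MeasurableSpace Ω] {μ : Measure Ω}
    {f g L : Ω → ℝ} (hf : Integrable f μ) (hg : Integrable g μ) (hL : Integrable L μ)
    (h : ∀ ω, |f ω - g ω| ≤ L ω) (ω : Ω) :
    |(f ω - μ[f]) - (g ω - μ[g])| ≤ L ω + μ[L] := by
  have hint : |μ[f] - μ[g]| ≤ μ[L] := by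
    rw [← integral_sub hf hg]
    exact (abs_integral_le_integral_abs).trans (integral_mono (hf.sub hg).abs hL h)
  calc |(f ω - μ[f]) - (g ω - μ[g])| = |(f ω - g ω) - (μ[f] - μ[g])| := by ring_nf
    _ ≤ |f ω - g ω| + |μ[f] - μ[g]| := abs_sub _ _
    _ ≤ L ω + μ[L] := add_le_add (h ω) hint

section CenteredCosMean

variable {Ω : Type*} [MeasurableSpace Ω] {P : Measure Ω} {m : ℕ} {z : Fin m → Ω → ℝ} {c₀ : ℝ}

/-- The paper's `𝔾_m(v, y)`. -/
noncomputable def centeredCosMean (P : Measure Ω) (z : Fin m → Ω → ℝ) (c₀ : ℝ) (ω : Ω)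
    (v y : ℝ) : ℝ :=
  (1 / (m : ℝ)) * ∑ i, (cos (v * (z i ω - y) - c₀) - ∫ ω', cos (v * (z i ω' - y) - c₀) ∂P)

lemma measure_le_abs_centeredCosMean_le [IsProbabilityMeasure P] (hm : 0 < m)
    (hz : ∀ i, Measurable (z i)) (hind : iIndepFun z P) (v y : ℝ) {t : ℝ} (ht : 0 ≤ t) :
    P {ω | t ≤ |centeredCosMean P z c₀ ω v y|} ≤
      ENNReal.ofReal (2 * exp (-((m : ℝ) * t ^ 2) / 2)) := by
  have hmR : (0 : ℝ) < m := Nat.cast_pos.2 hm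
  have hW : iIndepFun (fun i ω ↦ cos (v * (z i ω - y) - c₀)) P := by
    have := hind.comp (fun _ (x : ℝ) ↦ cos (v * (x - y) - c₀)) fun _ ↦ by fun_prop
    exact this
  have hset : {ω | t ≤ |centeredCosMean P z c₀ ω v y|} =
      {ω | m * t ≤ |∑ i, (cos (v * (z i ω - y) - c₀) - ∫ ω', cos (v * (z i ω' - y) - c₀) ∂P)|} := by
    ext ω
    simp only [centeredCosMean, mem_ofPred_eq, one_div_mul_eq_div, abs_div, abs_of_pos hmR,
      le_div_iff₀ hmR, mul_comm t]
  have := measure_le_abs_sum_sub_integral_le (μ := P) (fun i ↦ by fun_prop)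
    (fun i ω ↦ abs_cos_le_one _) hW (mul_nonneg hmR.le ht)
  rw [hset]
  convert this using 4
  simp only [Fintype.card_fin]
  field_simp

lemma abs_centeredCosMean_sub_le [IsProbabilityMeasure P] (hm : 0 < m)
    (hzi : ∀ i, Integrable (z i) P) {v v' y y' A M δ₁ δ₂ : ℝ}
    (hv' : |v'| ≤ A) (hy : |y| ≤ M) (hdv : |v - v'| ≤ δ₁) (hdy : |y - y'| ≤ δ₂) (ω : Ω) :
    |centeredCosMean P z c₀ ω v y - centeredCosMean P z c₀ ω v' y'| ≤
      δ₁ * ((1 / (m : ℝ)) * ∑ i, (|z i ω| + ∫ ω', |z i ω'| ∂P) + 2 * M) + 2 * A * δ₂ := by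
  have hmR : (0 : ℝ) < m := Nat.cast_pos.2 hm
  have hcos (v y : ℝ) (i : Fin m) : Integrable (fun ω ↦ cos (v * (z i ω - y) - c₀)) P :=
    have := (hzi i).aemeasurable
    Integrable.of_bound (by fun_prop) 1 (ae_of_all _ fun _ ↦ abs_cos_le_one _)
  set L : Fin m → Ω → ℝ := fun i ω ↦ δ₁ * (|z i ω| + M) + A * δ₂
  have hL (i : Fin m) : Integrable (L i) P :=
    (((hzi i).abs.add (integrable_const M)).const_mul δ₁).add (integrable_const _)
  have hLint (i : Fin m) : P[L i] = δ₁ * (∫ ω', |z i ω'| ∂P + M) + A * δ₂ := by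
    have hzM : Integrable (fun ω ↦ |z i ω| + M) P := (hzi i).abs.add (integrable_const M)
    rw [integral_add (hzM.const_mul δ₁) (integrable_const _), integral_const_mul,
      integral_add (hzi i).abs (integrable_const M)]
    simp
  have hstep (i : Fin m) (ω : Ω) :
      |cos (v * (z i ω - y) - c₀) - cos (v' * (z i ω - y') - c₀)| ≤ L i ω :=
    (abs_cos_mul_sub_sub_cos_mul_sub_le _ _ _ _ _ _).trans <| add_le_add
      (mul_le_mul hdv (by linarith) (by positivity) ((abs_nonneg _).trans hdv))
      (mul_le_mul hv' hdy (abs_nonneg _) ((abs_nonneg _).trans hv'))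
  calc |centeredCosMean P z c₀ ω v y - centeredCosMean P z c₀ ω v' y'|
      = (1 / (m : ℝ)) * |∑ i, ((cos (v * (z i ω - y) - c₀) -
            ∫ ω', cos (v * (z i ω' - y) - c₀) ∂P) -
          (cos (v' * (z i ω - y') - c₀) - ∫ ω', cos (v' * (z i ω' - y') - c₀) ∂P))| := by
        rw [centeredCosMean, centeredCosMean, ← mul_sub, ← Finset.sum_sub_distrib,
          abs_mul, abs_of_pos (one_div_pos.2 hmR)]
    _ ≤ (1 / (m : ℝ)) * ∑ i, (L i ω + P[L i]) := by
        gcongr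
        exact (Finset.abs_sum_le_sum_abs _ _).trans <| Finset.sum_le_sum fun i _ ↦
          abs_sub_integral_sub_sub_integral_le (hcos v y i) (hcos v' y' i) (hL i) (hstep i) ω
    _ = δ₁ * ((1 / (m : ℝ)) * ∑ i, (|z i ω| + ∫ ω', |z i ω'| ∂P) + 2 * M) + 2 * A * δ₂ := by
        simp only [hLint]
        simp only [L, mul_add, Finset.sum_add_distrib, ← Finset.mul_sum, Finset.sum_const,
          Finset.card_univ, Fintype.card_fin, nsmul_eq_mul]
        field_simp
        ring

lemma exists_mem_grid_abs_centeredCosMean_sub_le [IsProbabilityMeasure P] (hm : 0 < m)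
    (hzi : ∀ i, Integrable (z i) P) {c₁ c₂ c₃ Δ₁ Δ₂ K : ℝ}
    (hc₁ : 0 ≤ c₁) (hΔ₁ : 0 < Δ₁) (hΔ₂ : 0 < Δ₂) {ω : Ω}
    (hK : (1 / (m : ℝ)) * ∑ i, (|z i ω| + ∫ ω', |z i ω'| ∂P) ≤ K)
    {v y : ℝ} (hv : v ∈ Icc 0 c₁) (hy : y ∈ Icc c₂ c₃) :
    ∃ p ∈ gridIcc 0 c₁ Δ₁ ×ˢ gridIcc c₂ c₃ Δ₂,
      |centeredCosMean P z c₀ ω v y - centeredCosMean P z c₀ ω p.1 p.2| ≤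
        Δ₁ * (K + 2 * max |c₂| |c₃|) + 2 * c₁ * Δ₂ := by
  obtain ⟨v', hv', hdv⟩ := exists_mem_gridIcc_abs_sub_le hΔ₁ hv
  obtain ⟨y', hy', hdy⟩ := exists_mem_gridIcc_abs_sub_le hΔ₂ hy
  have hv'c : |v'| ≤ c₁ := by
    obtain ⟨h0, h1⟩ := gridIcc_subset_Icc hc₁ hΔ₁ hv'
    rwa [abs_of_nonneg h0]
  refine ⟨(v', y'), Finset.mem_product.2 ⟨hv', hy'⟩, ?_⟩
  calc _ ≤ Δ₁ * ((1 / (m : ℝ)) * ∑ i, (|z i ω| + ∫ ω', |z i ω'| ∂P) + 2 * max |c₂| |c₃|) +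
        2 * c₁ * Δ₂ :=
      abs_centeredCosMean_sub_le hm hzi hv'c (abs_le_max_abs_abs hy.1 hy.2) hdv hdy ω
    _ ≤ Δ₁ * (K + 2 * max |c₂| |c₃|) + 2 * c₁ * Δ₂ := by gcongr

end CenteredCosMean

lemma sum_abs_add_add_integral_abs_add_le {Ω ι : Type*} [MeasurableSpace Ω] {P : Measure Ω}
    [IsProbabilityMeasure P] [Fintype ι] {X : ι → Ω → ℝ} (hX : ∀ i, Integrable (X i) P)
    (a : ι → ℝ) (ω : Ω) :
    ∑ i, (|a i + X i ω| + ∫ ω', |a i + X i ω'| ∂P) ≤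
      2 * ∑ i, |a i| + ∑ i, (|X i ω| + ∫ ω', |X i ω'| ∂P) := by
  rw [Finset.mul_sum, ← Finset.sum_add_distrib]
  refine Finset.sum_le_sum fun i _ ↦ ?_
  have hint : ∫ ω', |a i + X i ω'| ∂P ≤ |a i| + ∫ ω', |X i ω'| ∂P := by
    calc ∫ ω', |a i + X i ω'| ∂P ≤ ∫ ω', (|a i| + |X i ω'|) ∂P :=
          integral_mono ((integrable_const _).add (hX i)).abs ((integrable_const _).add (hX i).abs)
            fun _ ↦ abs_add_le _ _
      _ = |a i| + ∫ ω', |X i ω'| ∂P := by rw [integral_add (integrable_const _) (hX i).abs]; simp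
  linarith [abs_add_le (a i) (X i ω)]

lemma exists_mem_grid_abs_centeredCosMean_add_sub_le {Ω : Type*} [MeasurableSpace Ω]
    {P : Measure Ω} [IsProbabilityMeasure P] {m : ℕ} (hm : 0 < m) {X : Fin m → Ω → ℝ}
    (hX : ∀ i, Integrable (X i) P) {EX : ℝ} (hEX : ∀ i, ∫ ω, |X i ω| ∂P = EX)
    {μs : Fin m → ℝ} {ρ : ℝ} (hρ : (1 / (m : ℝ)) * ∑ i, |μs i| ≤ ρ) (c₀ : ℝ)
    {c₁ c₂ c₃ Δ₁ Δ₂ s : ℝ} (hc₁ : 0 ≤ c₁) (hΔ₁ : 0 < Δ₁) (hΔ₂ : 0 < Δ₂) {ω : Ω}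
    (hω : ∑ i, |X i ω| ≤ m * (EX + s)) {v y : ℝ} (hv : v ∈ Icc 0 c₁) (hy : y ∈ Icc c₂ c₃) :
    ∃ p ∈ gridIcc 0 c₁ Δ₁ ×ˢ gridIcc c₂ c₃ Δ₂,
      |centeredCosMean P (fun i ω ↦ μs i + X i ω) c₀ ω v y -
          centeredCosMean P (fun i ω ↦ μs i + X i ω) c₀ ω p.1 p.2| ≤
        Δ₁ * (2 * EX + 2 * max |c₂| |c₃| + 2 * ρ + s) + 2 * c₁ * Δ₂ := by
  have hmR : (0 : ℝ) < m := Nat.cast_pos.2 hm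
  have hK : (1 / (m : ℝ)) * ∑ i, (|μs i + X i ω| + ∫ ω', |μs i + X i ω'| ∂P) ≤
      2 * EX + 2 * ρ + s := by
    have := sum_abs_add_add_integral_abs_add_le hX μs ω
    simp only [hEX, Finset.sum_add_distrib, Finset.sum_const, Finset.card_univ, Fintype.card_fin,
      nsmul_eq_mul] at this ⊢
    rw [one_div_mul_eq_div, div_le_iff₀ hmR] at hρ ⊢
    nlinarith
  obtain ⟨p, hp, hclose⟩ := exists_mem_grid_abs_centeredCosMean_sub_le hm
    (fun i ↦ (integrable_const _).add (hX i)) hc₁ hΔ₁ hΔ₂ hK hv hy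
  exact ⟨p, hp, hclose.trans_eq (by ring)⟩

lemma mul_add_mul_le_of_add_eq_div_max {Δ₁ Δ₂ r c κ : ℝ} (hΔ₁ : 0 < Δ₁) (hr : 0 ≤ r)
    (hc : 0 ≤ c) (h : r + c = κ / max Δ₁ Δ₂) : Δ₁ * r + Δ₂ * c ≤ κ :=
  calc Δ₁ * r + Δ₂ * c ≤ max Δ₁ Δ₂ * (r + c) := by
        rw [mul_add]
        exact add_le_add (mul_le_mul_of_nonneg_right (le_max_left _ _) hr)
          (mul_le_mul_of_nonneg_right (le_max_right _ _) hc)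
    _ = κ := by rw [h, mul_div_cancel₀ _ (hΔ₁.trans_le (le_max_left _ _)).ne']

/-- Concentration of the empirical process `𝔾_m(v, y) = (1/m) Σᵢ (cos(v(zᵢ−y)−c₀) − E[⋯])` over
`(v, y) ∈ [0, c₁] × [c₂, c₃]`, for `z_i = μ_i + X_i` with `X_i` i.i.d. `P₀` having a finite
second moment. -/
theorem concentration_empirical_process_case1
    {Ω : Type*} [MeasurableSpace Ω] (P : Measure Ω) [IsProbabilityMeasure P]
    (P₀ : Measure ℝ) [IsProbabilityMeasure P₀]
    (hP₀2 : Integrable (fun x : ℝ => x ^ 2) P₀)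
    (m : ℕ) (hm : 0 < m)
    (X : Fin m → Ω → ℝ) (hXmeas : ∀ i, Measurable (X i))
    (hindep : iIndepFun X P)
    (hXlaw : ∀ i, Measure.map (X i) P = P₀)
    (μs : Fin m → ℝ) (ρ : ℝ) (hρ : (1 / (m : ℝ)) * ∑ i, |μs i| ≤ ρ)
    (z : Fin m → Ω → ℝ) (hz : ∀ i ω', z i ω' = μs i + X i ω')
    (c₀ c₁ c₂ c₃ : ℝ) (hc₁ : 0 < c₁) (hc : c₂ < c₃)
    (G : Ω → ℝ → ℝ → ℝ)
    (hG : ∀ ω' v y, G ω' v y = (1 / (m : ℝ)) *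
      ∑ i, (Real.cos (v * (z i ω' - y) - c₀) -
        ∫ ω'', Real.cos (v * (z i ω'' - y) - c₀) ∂P))
    (Δ₁ Δ₂ κ₁ κ₂ : ℝ) (hΔ₁ : 0 < Δ₁) (hΔ₂ : 0 < Δ₂) (hκ : κ₂ < κ₁) (hκ₂ : 0 < κ₂)
    (R₁ : ℝ) (hR₁ : R₁ = 2 * (∫ x, |x| ∂P₀) + 2 * max |c₂| |c₃| + 2 * ρ)
    (hpos : 0 < κ₂ / max Δ₁ Δ₂ - (2 * c₁ + R₁)) :
    P {ω' | κ₁ ≤ ⨆ v ∈ Set.Icc (0:ℝ) c₁, ⨆ y ∈ Set.Icc c₂ c₃, |G ω' v y|} ≤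
      ENNReal.ofReal
        (2 * (c₁ / Δ₁ + 1) * ((c₃ - c₂) / Δ₂ + 1) *
            Real.exp (-((m : ℝ) * (κ₁ - κ₂) ^ 2) / 2) +
          variance (fun x : ℝ => |x|) P₀ /
            ((m : ℝ) * (κ₂ / max Δ₁ Δ₂ - (2 * c₁ + R₁)) ^ 2)) := by
  have hmR : (0 : ℝ) < m := Nat.cast_pos.2 hm
  obtain rfl : G = centeredCosMean P z c₀ := by funext ω v y; exact hG ω v y
  obtain rfl : z = fun i ω ↦ μs i + X i ω := by funext i ω; exact hz i ω
  set G := centeredCosMean P (fun i ω ↦ μs i + X i ω) c₀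
  set s := κ₂ / max Δ₁ Δ₂ - (2 * c₁ + R₁) with hs
  set B := {ω | m * s ≤ |∑ i, |X i ω| - m * ∫ x, |x| ∂P₀|}
  have hid : MemLp id 2 P₀ := (memLp_two_iff_integrable_sq aestronglyMeasurable_id).2 hP₀2
  have hXint (i : Fin m) : Integrable (X i) P :=
    (((hXlaw i).symm ▸ hid).comp_of_map (hXmeas i).aemeasurable).integrable one_le_two
  have hEX (i : Fin m) : ∫ ω, |X i ω| ∂P = ∫ x, |x| ∂P₀ := by
    rw [← hXlaw i, integral_map (hXmeas i).aemeasurable (by fun_prop)]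
  have hR₁s : 0 ≤ R₁ + s := by
    have hρ0 : 0 ≤ ρ := (by positivity : (0 : ℝ) ≤ 1 / m * ∑ i, |μs i|).trans hρ
    rw [hR₁]
    linarith [(by positivity : (0 : ℝ) ≤ 2 * (∫ x, |x| ∂P₀) + 2 * max |c₂| |c₃|)]
  have hnet : ∀ ω ∉ B, ∀ v ∈ Icc 0 c₁, ∀ y ∈ Icc c₂ c₃,
      ∃ p ∈ gridIcc 0 c₁ Δ₁ ×ˢ gridIcc c₂ c₃ Δ₂, |G ω v y - G ω p.1 p.2| ≤ κ₂ := by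
    intro ω hω v hv y hy
    have hgood : ∑ i, |X i ω| ≤ m * (∫ x, |x| ∂P₀ + s) := by
      simp only [B, mem_ofPred_eq, not_le] at hω
      linarith [le_abs_self (∑ i, |X i ω| - m * ∫ x, |x| ∂P₀)]
    obtain ⟨p, hp, hclose⟩ := exists_mem_grid_abs_centeredCosMean_add_sub_le hm hXint hEX hρ
      c₀ hc₁.le hΔ₁ hΔ₂ hgood hv hy
    refine ⟨p, hp, hclose.trans ?_⟩
    calc _ = Δ₁ * (R₁ + s) + Δ₂ * (2 * c₁) := by rw [hR₁]; ring
      _ ≤ κ₂ := mul_add_mul_le_of_add_eq_div_max hΔ₁ hR₁s (by positivity) (by rw [hs]; ring)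
  have hgrid (p : ℝ × ℝ) : P {ω | κ₁ - κ₂ ≤ |G ω p.1 p.2|} ≤
      ENNReal.ofReal (2 * exp (-(m * (κ₁ - κ₂) ^ 2) / 2)) := by
    have hind : iIndepFun (fun i ω ↦ μs i + X i ω) P := by
      have := hindep.comp (fun i (x : ℝ) ↦ μs i + x) fun i ↦ measurable_const.add measurable_id
      exact this
    exact measure_le_abs_centeredCosMean_le hm (fun i ↦ measurable_const.add (hXmeas i)) hind
      p.1 p.2 (sub_nonneg.2 hκ.le)
  have hB : P B ≤ ENNReal.ofReal (m * variance (fun x : ℝ ↦ |x|) P₀ / (m * s) ^ 2) := by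
    simpa using measure_le_abs_sum_comp_sub_le hXmeas hindep hXlaw (f := fun x ↦ |x|) hid.abs
      (mul_pos hmR hpos)
  have hcard := card_gridIcc_product_le hc₁.le hc.le hΔ₁ hΔ₂
  rw [sub_zero] at hcard
  refine (measure_le_biSup_abs_le_of_net P hκ₂.le (gridIcc_nonempty.product gridIcc_nonempty)
    hnet (by positivity) (fun p _ ↦ hgrid p)
    (div_nonneg (mul_nonneg hmR.le (variance_nonneg _ _)) (sq_nonneg _)) hB).trans
    (ENNReal.ofReal_le_ofReal (add_le_add ?_ (le_of_eq (by field_simp))))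
  rw [show ∀ a b e : ℝ, 2 * a * b * e = a * b * (2 * e) by intros; ring]
  gcongr
end

section
/- With the definitions below, suppose π_{1,m} > 0 and that for each τ ∈ {a, b} there exists j with μ_j ≠ τ, so u_m = min_{τ ∈ {a,b}} min_{j : μ_j ≠ τ} |μ_j − τ| is well-defined and positive. Then for every t > 0 with t·(b−a) ≥ 2 and t·u_m ≥ 2, | π_{1,m}^{−1}·φ_m(t, μ) − 1 | ≤ ( 4σ(‖ω‖_TV + ‖ω‖_∞) + 12 ) / ( π_{1,m}·u_m·t ) + 4 / ( (b−a)·t·π_{1,m} ). -/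
open MeasureTheory Real Set Filter intervalIntegral

/-!
The sine-integral estimate `|∫₀ˣ sin y / y dy - sign x · π/2| ≤ 1/|x|`, obtained from
`1/y = ∫₀^∞ e^{-sy} ds` and Fubini, shows that `ψ₁(t, μ)` is within
`(π t)⁻¹ (|μ - a|⁻¹ + |μ - b|⁻¹)` of `1_{(a,b)}(μ) + (1_{μ=a} + 1_{μ=b}) / 2`. A Riemann–Lebesgue
bound for functions of bounded variation (split into two monotone parts, each handled by a
layer-cake argument) shows that `ψ̃_{1,0}(t, μ; τ)` is within `4σ(‖ω‖_TV + ‖ω‖_∞) / (t |μ - τ|)`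
of `1_{μ=τ}`. The endpoint terms cancel, so every summand of `φ_m - π_{1,m}` is
`O(1 / (u_m t))`, and so is their average.
-/

lemma integral_exp_neg_mul_Ioi {x : ℝ} (hx : 0 < x) :
    ∫ s in Ioi (0 : ℝ), exp (-(s * x)) = x⁻¹ := by
  convert integral_exp_mul_Ioi (a := -x) (by linarith) 0 using 1
  · congr 1 with s
    ring_nf
  · simp

lemma integrableOn_exp_neg_mul_Ioi {x : ℝ} (hx : 0 < x) :
    IntegrableOn (fun s => exp (-(s * x))) (Ioi 0) :=
  (exp_neg_integrableOn_Ioi 0 hx).congr_fun (fun s _ => by ring_nf) measurableSet_Ioi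

lemma integral_exp_neg_mul_mul_sin (s T : ℝ) :
    ∫ y in (0 : ℝ)..T, exp (-(s * y)) * sin y
      = (1 - exp (-(s * T)) * (cos T + s * sin T)) / (1 + s ^ 2) := by
  have hderiv : ∀ y, HasDerivAt (fun y => -(exp (-(s * y)) * (cos y + s * sin y)) / (1 + s ^ 2))
      (exp (-(s * y)) * sin y) y := by
    intro y
    have hexp := (((hasDerivAt_id' y).const_mul s).fun_neg).exp
    have htrig := (hasDerivAt_cos y).fun_add ((hasDerivAt_sin y).const_mul s)
    refine ((hexp.mul htrig).neg.div_const _).congr_deriv ?_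
    field_simp
    ring
  rw [integral_eq_sub_of_hasDerivAt (fun y _ => hderiv y)
    (Continuous.intervalIntegrable (by fun_prop) _ _)]
  simp only [mul_zero, neg_zero, exp_zero, cos_zero, sin_zero]
  ring

lemma abs_exp_neg_mul_mul_cos_add_mul_sin_div_le (s T : ℝ) :
    |exp (-(s * T)) * (cos T + s * sin T) / (1 + s ^ 2)| ≤ exp (-(s * T)) := by
  have hsq : (cos T + s * sin T) ^ 2 ≤ (1 + s ^ 2) ^ 2 := by
    nlinarith [sin_sq_add_cos_sq T, sq_nonneg (s * cos T - sin T), sq_nonneg s]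
  rw [abs_div, abs_mul, abs_of_pos (exp_pos _), abs_of_pos (by positivity : (0 : ℝ) < 1 + s ^ 2),
    mul_div_assoc]
  exact mul_le_of_le_one_right (exp_pos _).le
    ((div_le_one (by positivity)).2 (abs_le.2 (abs_le_of_sq_le_sq' hsq (by positivity))))

lemma integrable_exp_neg_mul_mul_sin_prod {T : ℝ} :
    Integrable (fun p : ℝ × ℝ => exp (-(p.2 * p.1)) * sin p.1)
      ((volume.restrict (Ioc 0 T)).prod (volume.restrict (Ioi 0))) := by
  have hcont : Continuous fun p : ℝ × ℝ => exp (-(p.2 * p.1)) * sin p.1 := by fun_prop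
  rw [integrable_prod_iff hcont.aestronglyMeasurable]
  constructor
  · filter_upwards [ae_restrict_mem measurableSet_Ioc] with y hy
    exact (integrableOn_exp_neg_mul_Ioi hy.1).mul_const _
  · refine (integrable_const (1 : ℝ)).mono'
      hcont.aestronglyMeasurable.norm.integral_prod_right' ?_
    filter_upwards [ae_restrict_mem measurableSet_Ioc] with y hy
    have hnorm : ∫ s in Ioi 0, ‖exp (-(s * y)) * sin y‖ = |sin y| * y⁻¹ := by
      simp_rw [norm_mul, norm_of_nonneg (exp_pos _).le, MeasureTheory.integral_mul_const,
        integral_exp_neg_mul_Ioi hy.1, Real.norm_eq_abs, mul_comm]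
    rw [hnorm, Real.norm_eq_abs, ← div_eq_mul_inv,
      abs_of_nonneg (div_nonneg (abs_nonneg _) hy.1.le), div_le_one hy.1]
    exact (abs_sin_le_abs).trans_eq (abs_of_pos hy.1)

lemma integral_sin_div_eq {T : ℝ} (hT : 0 < T) :
    ∫ y in (0 : ℝ)..T, sin y / y
      = π / 2 - ∫ s in Ioi 0, exp (-(s * T)) * (cos T + s * sin T) / (1 + s ^ 2) := by
  have hremainder : IntegrableOn
      (fun s => exp (-(s * T)) * (cos T + s * sin T) / (1 + s ^ 2)) (Ioi 0) := by
    refine (integrableOn_exp_neg_mul_Ioi hT).mono'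
      (Continuous.div (by fun_prop) (by fun_prop) fun s => by positivity).aestronglyMeasurable
      (ae_of_all _ fun s => abs_exp_neg_mul_mul_cos_add_mul_sin_div_le s T)
  calc ∫ y in (0 : ℝ)..T, sin y / y
      = ∫ y in Ioc 0 T, ∫ s in Ioi 0, exp (-(s * y)) * sin y := by
        rw [integral_of_le hT.le]
        refine setIntegral_congr_fun measurableSet_Ioc fun y hy => ?_
        rw [MeasureTheory.integral_mul_const, integral_exp_neg_mul_Ioi hy.1, div_eq_inv_mul]
    _ = ∫ s in Ioi 0, ∫ y in Ioc 0 T, exp (-(s * y)) * sin y :=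
        integral_integral_swap integrable_exp_neg_mul_mul_sin_prod
    _ = ∫ s in Ioi 0, ((1 + s ^ 2)⁻¹ - exp (-(s * T)) * (cos T + s * sin T) / (1 + s ^ 2)) := by
        congr 1 with s
        rw [← integral_of_le hT.le, integral_exp_neg_mul_mul_sin]
        ring
    _ = π / 2 - ∫ s in Ioi 0, exp (-(s * T)) * (cos T + s * sin T) / (1 + s ^ 2) := by
        rw [integral_sub integrable_inv_one_add_sq.integrableOn hremainder,
          integral_Ioi_inv_one_add_sq, arctan_zero, sub_zero]

lemma abs_integral_sin_div_sub_pi_div_two_le {T : ℝ} (hT : 0 < T) :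
    |(∫ y in (0 : ℝ)..T, sin y / y) - π / 2| ≤ T⁻¹ := by
  rw [integral_sin_div_eq hT, sub_sub_cancel_left, abs_neg, ← integral_exp_neg_mul_Ioi hT]
  exact (Real.norm_eq_abs _).symm.trans_le <| norm_integral_le_of_norm_le
    (integrableOn_exp_neg_mul_Ioi hT)
    (ae_of_all _ fun s => abs_exp_neg_mul_mul_cos_add_mul_sin_div_le s T)

lemma intervalIntegrable_sin_div (u v : ℝ) :
    IntervalIntegrable (fun y => sin y / y) volume u v :=
  (continuous_sinc.intervalIntegrable u v).congr_ae <| ae_restrict_of_ae <| by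
    filter_upwards [compl_mem_ae_iff.2 (measure_singleton (0 : ℝ))] with y hy
    exact sinc_of_ne_zero hy

lemma integral_sin_div_neg (x : ℝ) :
    ∫ y in (0 : ℝ)..-x, sin y / y = -∫ y in (0 : ℝ)..x, sin y / y := by
  have h := integral_comp_neg (a := 0) (b := x) fun y => sin y / y
  simp only [sin_neg, neg_div_neg_eq, neg_zero] at h
  rw [h, integral_symm]

/- At `x = 0` both sides vanish (`0⁻¹ = 0`), which lets the bounds below be stated without
excluding `μ = a` or `μ = b`. -/
lemma abs_integral_sin_div_sub_sign_le (x : ℝ) :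
    |(∫ y in (0 : ℝ)..x, sin y / y) - Real.sign x * (π / 2)| ≤ |x|⁻¹ := by
  rcases lt_trichotomy x 0 with hx | rfl | hx
  · have h := abs_integral_sin_div_sub_pi_div_two_le (neg_pos.2 hx)
    rw [integral_sin_div_neg, ← abs_neg] at h
    rw [Real.sign_of_neg hx, abs_of_neg hx]
    convert h using 2
    ring
  · simp
  · rw [Real.sign_of_pos hx, one_mul, abs_of_pos hx]
    exact abs_integral_sin_div_sub_pi_div_two_le hx

lemma abs_integral_sin_div_sub_le (u v : ℝ) :
    |(∫ y in u..v, sin y / y) - (Real.sign v - Real.sign u) * (π / 2)| ≤ |u|⁻¹ + |v|⁻¹ := by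
  rw [← integral_interval_sub_left (intervalIntegrable_sin_div 0 v)
    (intervalIntegrable_sin_div 0 u)]
  calc _ = |((∫ y in (0 : ℝ)..v, sin y / y) - Real.sign v * (π / 2))
        - ((∫ y in (0 : ℝ)..u, sin y / y) - Real.sign u * (π / 2))| := by ring_nf
    _ ≤ |v|⁻¹ + |u|⁻¹ := (abs_sub _ _).trans
        (add_le_add (abs_integral_sin_div_sub_sign_le v) (abs_integral_sin_div_sub_sign_le u))
    _ = |u|⁻¹ + |v|⁻¹ := add_comm _ _

lemma abs_integral_cos_mul_le {l : ℝ} (hl : l ≠ 0) (u v : ℝ) :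
    |∫ s in u..v, cos (l * s)| ≤ 2 / |l| := by
  rw [integral_comp_mul_left (fun s => cos s) hl, integral_cos, smul_eq_mul, abs_mul, abs_inv,
    inv_mul_eq_div]
  gcongr
  exact (abs_sub _ _).trans (by linarith [abs_sin_le_one (l * v), abs_sin_le_one (l * u)])

lemma abs_setIntegral_inter_Ioc_le {U : Set ℝ} (hU : IsUpperSet U) {φ : ℝ → ℝ} {α β C : ℝ}
    (hαβ : α ≤ β) (hC : ∀ u ∈ Icc α β, |∫ s in u..β, φ s| ≤ C) :
    |∫ s in U ∩ Ioc α β, φ s| ≤ C := by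
  by_cases hβ : β ∈ U
  · have hβ' : β ∈ U ∩ Icc α β := ⟨hβ, hαβ, le_rfl⟩
    have hbdd : BddBelow (U ∩ Icc α β) := ⟨α, fun _ hs => hs.2.1⟩
    set u := sInf (U ∩ Icc α β)
    have hu : u ∈ Icc α β := ⟨le_csInf ⟨β, hβ'⟩ fun _ hs => hs.2.1, csInf_le hbdd hβ'⟩
    have hsub : Ioc u β ⊆ U ∩ Ioc α β := fun s hs => by
      obtain ⟨w, hw, hws⟩ := exists_lt_of_csInf_lt ⟨β, hβ'⟩ hs.1
      exact ⟨hU hws.le hw.1, hw.2.1.trans_lt hws, hs.2⟩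
    have hsup : U ∩ Ioc α β ⊆ Icc u β := fun s hs =>
      ⟨csInf_le hbdd ⟨hs.1, hs.2.1.le, hs.2.2⟩, hs.2.2⟩
    have hae : (U ∩ Ioc α β : Set ℝ) =ᵐ[volume] Ioc u β :=
      (hsup.eventuallyLE.trans Ioc_ae_eq_Icc.symm.le).antisymm hsub.eventuallyLE
    rw [setIntegral_congr_set hae, ← integral_of_le hu.2]
    exact hC u hu
  · have hempty : U ∩ Ioc α β = ∅ :=
      eq_empty_of_forall_notMem fun s hs => hβ (hU hs.2.2 hs.1)
    rw [hempty, Measure.restrict_empty, integral_zero_measure, abs_zero]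
    exact (abs_nonneg _).trans (hC β ⟨hαβ, le_rfl⟩)

lemma abs_integral_sub_mul_le_of_monotone {g φ : ℝ → ℝ} (hg : Monotone g) {α β C : ℝ}
    (hαβ : α ≤ β) (hφ : IntegrableOn φ (Ioc α β))
    (hC : ∀ u ∈ Icc α β, |∫ s in u..β, φ s| ≤ C) :
    |∫ s in α..β, (g s - g α) * φ s| ≤ C * (g β - g α) := by
  -- Layer cake: `g s - g α = ∫ y in g α..g β, 1[y ≤ g s]`, and after Fubini each slice is an
  -- integral of `φ` over an interval ending at `β`.
  set μ := volume.restrict (Ioc α β)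
  set ν := volume.restrict (Ioc (g α) (g β))
  set F : ℝ × ℝ → ℝ := {p | p.2 ≤ g p.1}.indicator fun p => φ p.1
  have hF : Integrable F (μ.prod ν) := by
    refine (hφ.comp_fst ν).indicator ?_
    exact measurableSet_le measurable_snd (hg.measurable.comp measurable_fst)
  have hlayer : ∀ s ∈ Ioc α β, (g s - g α) * φ s = ∫ y, F (s, y) ∂ν := by
    intro s hs
    have hfiber : (fun y => F (s, y)) = (Iic (g s)).indicator fun _ => φ s := by
      ext y
      simp only [F, indicator, mem_ofPred_eq, mem_Iic]
    rw [hfiber, setIntegral_indicator measurableSet_Iic, Ioc_inter_Iic,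
      min_eq_right (hg hs.2), setIntegral_const, smul_eq_mul,
      Real.volume_real_Ioc_of_le (hg hs.1.le)]
  have hslice : ∀ y, ‖∫ s, F (s, y) ∂μ‖ ≤ C := by
    intro y
    have hU : IsUpperSet {s | y ≤ g s} := fun a b hab ha => le_trans ha (hg hab)
    have hfiber : (fun s => F (s, y)) = {s | y ≤ g s}.indicator φ := by
      ext s
      simp only [F, indicator, mem_ofPred_eq]
    rw [hfiber, setIntegral_indicator (measurableSet_le measurable_const hg.measurable),
      inter_comm]
    exact abs_setIntegral_inter_Ioc_le hU hαβ hC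
  rw [integral_of_le hαβ, setIntegral_congr_fun measurableSet_Ioc hlayer,
    integral_integral_swap (f := fun s y => F (s, y)) hF, ← integral_of_le (hg hαβ),
    ← abs_of_nonneg (sub_nonneg.2 (hg hαβ))]
  exact norm_integral_le_of_norm_le_const fun y _ => hslice y

lemma abs_integral_sub_mul_le_of_monotoneOn {g φ : ℝ → ℝ} {α β C : ℝ}
    (hg : MonotoneOn g (Icc α β)) (hαβ : α ≤ β) (hφ : IntegrableOn φ (Ioc α β))
    (hC : ∀ u ∈ Icc α β, |∫ s in u..β, φ s| ≤ C) :
    |∫ s in α..β, (g s - g α) * φ s| ≤ C * (g β - g α) := by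
  have hα : α ∈ Icc α β := ⟨le_rfl, hαβ⟩
  have hβ : β ∈ Icc α β := ⟨hαβ, le_rfl⟩
  obtain ⟨G, hG, hgG⟩ := hg.exists_monotone_extension
    ⟨g α, forall_mem_image.2 fun s hs => hg hα hs hs.1⟩
    ⟨g β, forall_mem_image.2 fun s hs => hg hs hβ hs.2⟩
  have hcongr : EqOn (fun s => (g s - g α) * φ s) (fun s => (G s - G α) * φ s)
      (uIcc α β) := fun s hs => by
    rw [uIcc_of_le hαβ] at hs
    simp only [hgG hs, hgG hα]
  rw [integral_congr hcongr, hgG hα, hgG hβ]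
  exact abs_integral_sub_mul_le_of_monotone hG hαβ hφ hC

lemma abs_integral_mul_le_of_boundedVariationOn {f φ : ℝ → ℝ} {α β C : ℝ}
    (hf : BoundedVariationOn f (Icc α β)) (hαβ : α ≤ β) (hφ : ContinuousOn φ (Icc α β))
    (hC : ∀ u ∈ Icc α β, |∫ s in u..β, φ s| ≤ C) :
    |∫ s in α..β, f s * φ s|
      ≤ C * (2 * (eVariationOn f (Icc α β)).toReal + |f α| + (f α - f β)) := by
  have hα : α ∈ Icc α β := ⟨le_rfl, hαβ⟩
  set p := variationOnFromTo f (Icc α β) α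
  set q := p - f
  have hp : MonotoneOn p (Icc α β) :=
    variationOnFromTo.monotoneOn hf.locallyBoundedVariationOn hα
  have hq : MonotoneOn q (Icc α β) :=
    variationOnFromTo.sub_self_monotoneOn hf.locallyBoundedVariationOn hα
  have hpα : p α = 0 := variationOnFromTo.self f _ α
  have hpβ : p β = (eVariationOn f (Icc α β)).toReal :=
    (variationOnFromTo.eq_of_le f _ hαβ).trans (by rw [inter_self])
  have hqα : q α = -f α := by simp [q, hpα]
  have hqβ : q β = p β - f β := rfl
  have hφ' : ContinuousOn φ (uIcc α β) := by rwa [uIcc_of_le hαβ]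
  have hint : ∀ g : ℝ → ℝ, MonotoneOn g (Icc α β) →
      IntervalIntegrable (fun s => (g s - g α) * φ s) volume α β := fun g hg => by
    rw [← uIcc_of_le hαβ] at hg
    exact (hg.intervalIntegrable.sub intervalIntegrable_const).mul_continuousOn hφ'
  have hsplit : ∫ s in α..β, f s * φ s = (∫ s in α..β, (p s - p α) * φ s)
      - (∫ s in α..β, (q s - q α) * φ s) + f α * ∫ s in α..β, φ s := by
    rw [← intervalIntegral.integral_const_mul, ← integral_sub (hint p hp) (hint q hq),
      ← integral_add ((hint p hp).sub (hint q hq)) (hφ'.intervalIntegrable.const_mul _)]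
    congr 1 with s
    simp only [q, Pi.sub_apply, hpα]
    ring
  have hφint : IntegrableOn φ (Ioc α β) := (hφ.integrableOn_Icc).mono_set Ioc_subset_Icc_self
  rw [hsplit]
  calc _ ≤ |∫ s in α..β, (p s - p α) * φ s| + |∫ s in α..β, (q s - q α) * φ s|
        + |f α| * |∫ s in α..β, φ s| := by
        rw [← abs_mul]
        exact (abs_add_le _ _).trans (add_le_add_left (abs_sub _ _) _)
    _ ≤ C * (p β - p α) + C * (q β - q α) + |f α| * C := by
        gcongr
        · exact abs_integral_sub_mul_le_of_monotoneOn hp hαβ hφint hC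
        · exact abs_integral_sub_mul_le_of_monotoneOn hq hαβ hφint hC
        · exact hC α hα
    _ = _ := by rw [hqβ, hqα, hpα, hpβ]; ring

noncomputable def psiOne (a b t μ : ℝ) : ℝ :=
  1 / π * ∫ y in ((μ - b) * t)..((μ - a) * t), sin y / y

noncomputable def psiTilde (ω : ℝ → ℝ) (σ t μ μ' : ℝ) : ℝ :=
  ∫ s in (-1 : ℝ)..1, ω s * cos (t * s * σ⁻¹ * (μ - μ'))

lemma sign_sub_sign_div_two {a b : ℝ} (hab : a < b) (μ : ℝ) :
    (Real.sign (μ - a) - Real.sign (μ - b)) / 2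
      = (if μ ∈ Ioo a b then 1 else 0)
        + ((if μ = a then 1 else 0) + (if μ = b then 1 else 0)) / 2 := by
  rcases lt_trichotomy μ a with h | rfl | h
  · simp [Real.sign_of_neg (sub_neg.2 h), Real.sign_of_neg (sub_neg.2 (h.trans hab)), h.ne,
      (h.trans hab).ne, h.not_gt]
  · simp [Real.sign_of_neg (sub_neg.2 hab), hab.ne]
  rcases lt_trichotomy μ b with h' | rfl | h'
  · simp [Real.sign_of_pos (sub_pos.2 h), Real.sign_of_neg (sub_neg.2 h'), h.ne', h'.ne, h, h']
  · simp [Real.sign_of_pos (sub_pos.2 hab), hab.ne']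
  · simp [Real.sign_of_pos (sub_pos.2 h), Real.sign_of_pos (sub_pos.2 h'), h.ne', h'.ne',
      h'.not_gt]

lemma abs_psiOne_sub_le {t : ℝ} (ht : 0 < t) (a b μ : ℝ) :
    |psiOne a b t μ - (Real.sign (μ - a) - Real.sign (μ - b)) / 2|
      ≤ π⁻¹ / t * (|μ - a|⁻¹ + |μ - b|⁻¹) := by
  have hsign : ∀ x, Real.sign (x * t) = Real.sign x := fun x => by
    rcases lt_trichotomy x 0 with hx | rfl | hx
    · rw [Real.sign_of_neg hx, Real.sign_of_neg (mul_neg_of_neg_of_pos hx ht)]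
    · rw [zero_mul]
    · rw [Real.sign_of_pos hx, Real.sign_of_pos (mul_pos hx ht)]
  have h := abs_integral_sin_div_sub_le ((μ - b) * t) ((μ - a) * t)
  rw [hsign, hsign, abs_mul, abs_mul, abs_of_pos ht] at h
  calc _ = π⁻¹ * |(∫ y in ((μ - b) * t)..((μ - a) * t), sin y / y)
        - (Real.sign (μ - a) - Real.sign (μ - b)) * (π / 2)| := by
        rw [← abs_of_pos (inv_pos.2 pi_pos), ← abs_mul, psiOne]
        congr 1
        field_simp
    _ ≤ π⁻¹ * ((|μ - b| * t)⁻¹ + (|μ - a| * t)⁻¹) := by gcongr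
    _ = π⁻¹ / t * (|μ - a|⁻¹ + |μ - b|⁻¹) := by
        rw [mul_inv, mul_inv]
        ring

lemma abs_psiTilde_sub_le {ω : ℝ → ℝ} (hω_nonneg : ∀ s, 0 ≤ ω s)
    (hω_bdd : ∃ C, ∀ s, ω s ≤ C) (hω_int : ∫ s in (-1 : ℝ)..1, ω s = 1)
    (hω_BV : BoundedVariationOn ω (Icc (-1) 1))
    {σ t : ℝ} (hσ : 0 < σ) (ht : 0 < t) (μ μ' : ℝ) :
    |psiTilde ω σ t μ μ' - if μ = μ' then 1 else 0|
      ≤ 4 * σ * ((eVariationOn ω (Icc (-1) 1)).toReal + ⨆ s, |ω s|) / t * |μ - μ'|⁻¹ := by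
  set V := (eVariationOn ω (Icc (-1) 1)).toReal
  set W := ⨆ s, |ω s|
  split_ifs with hμ
  · simp [psiTilde, hμ, hω_int]
  set c := t * σ⁻¹ * (μ - μ')
  have hc : c ≠ 0 := by positivity
  have hW : |ω (-1)| ≤ W := by
    obtain ⟨C, hC⟩ := hω_bdd
    refine le_ciSup (f := fun s => |ω s|) ⟨C, ?_⟩ (-1)
    rintro _ ⟨s, rfl⟩
    exact (abs_of_nonneg (hω_nonneg s)).trans_le (hC s)
  have hbound := abs_integral_mul_le_of_boundedVariationOn hω_BV (by norm_num)
    (by fun_prop : Continuous fun s => cos (c * s)).continuousOn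
    fun u _ => abs_integral_cos_mul_le hc u 1
  have hpsi : psiTilde ω σ t μ μ' = ∫ s in (-1 : ℝ)..1, ω s * cos (c * s) := by
    simp only [psiTilde, c]
    congr 1 with s
    ring_nf
  rw [sub_zero, hpsi]
  calc _ ≤ 2 / |c| * (2 * V + |ω (-1)| + (ω (-1) - ω 1)) := hbound
    _ ≤ 2 / |c| * (2 * V + 2 * W) := by
        refine mul_le_mul_of_nonneg_left ?_ (by positivity)
        linarith [hω_nonneg 1, le_abs_self (ω (-1))]
    _ = 4 * σ * (V + W) / t * |μ - μ'|⁻¹ := by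
        simp only [c, abs_mul, abs_of_pos ht, abs_of_pos (inv_pos.2 hσ)]
        field_simp
        ring

lemma abs_indicator_sub_psiOne_add_psiTilde_le {ω : ℝ → ℝ} (hω_nonneg : ∀ s, 0 ≤ ω s)
    (hω_bdd : ∃ C, ∀ s, ω s ≤ C) (hω_int : ∫ s in (-1 : ℝ)..1, ω s = 1)
    (hω_BV : BoundedVariationOn ω (Icc (-1) 1)) {σ a b t : ℝ} (hσ : 0 < σ) (hab : a < b)
    (ht : 0 < t) (μ : ℝ) :
    |(if μ ∈ Ioo a b then 1 else 0) - psiOne a b t μ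
        + (psiTilde ω σ t μ a + psiTilde ω σ t μ b) / 2|
      ≤ (π⁻¹ + 2 * σ * ((eVariationOn ω (Icc (-1) 1)).toReal + ⨆ s, |ω s|)) / t
          * (|μ - a|⁻¹ + |μ - b|⁻¹) := by
  have hψa := abs_psiTilde_sub_le hω_nonneg hω_bdd hω_int hω_BV hσ ht μ a
  have hψb := abs_psiTilde_sub_le hω_nonneg hω_bdd hω_int hω_BV hσ ht μ b
  have hψ₁ := abs_psiOne_sub_le ht a b μ
  rw [abs_sub_comm] at hψ₁
  calc _ = |((Real.sign (μ - a) - Real.sign (μ - b)) / 2 - psiOne a b t μ)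
        + (psiTilde ω σ t μ a - if μ = a then 1 else 0) / 2
        + (psiTilde ω σ t μ b - if μ = b then 1 else 0) / 2| := by
        rw [sign_sub_sign_div_two hab]
        ring_nf
    _ ≤ |(Real.sign (μ - a) - Real.sign (μ - b)) / 2 - psiOne a b t μ|
        + |psiTilde ω σ t μ a - if μ = a then 1 else 0| / 2
        + |psiTilde ω σ t μ b - if μ = b then 1 else 0| / 2 := by
        refine (abs_add_three _ _ _).trans_eq ?_
        rw [abs_div, abs_div, abs_two]
    _ ≤ _ := by
        grw [hψ₁, hψa, hψb]
        exact le_of_eq (by ring)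

def gapSet {ι : Type*} (x : ι → ℝ) (a b : ℝ) : Set ℝ :=
  {r | ∃ j, (x j ≠ a ∧ r = |x j - a|) ∨ (x j ≠ b ∧ r = |x j - b|)}

noncomputable def minGap {ι : Type*} (x : ι → ℝ) (a b : ℝ) : ℝ :=
  sInf (gapSet x a b)

section minGap

variable {ι : Type*} [Finite ι] {x : ι → ℝ} {a b : ℝ}

lemma gapSet_finite (x : ι → ℝ) (a b : ℝ) : (gapSet x a b).Finite :=
  ((finite_range fun j => |x j - a|).union (finite_range fun j => |x j - b|)).subset
    fun _ ⟨j, h⟩ => h.imp (fun h => ⟨j, h.2.symm⟩) fun h => ⟨j, h.2.symm⟩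

lemma minGap_pos (h : ∃ j, x j ≠ a) : 0 < minGap x a b := by
  obtain ⟨j, hj⟩ := h
  obtain ⟨i, hi | hi⟩ :=
    Set.Nonempty.csInf_mem (s := gapSet x a b) ⟨_, j, Or.inl ⟨hj, rfl⟩⟩ (gapSet_finite x a b)
  all_goals rw [minGap, hi.2]; exact abs_pos.2 (sub_ne_zero.2 hi.1)

lemma inv_abs_sub_le_inv_minGap (h : ∃ j, x j ≠ a) (j : ι) {τ : ℝ}
    (hτ : τ = a ∨ τ = b) :
    |x j - τ|⁻¹ ≤ (minGap x a b)⁻¹ := by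
  by_cases hj : x j = τ
  · rw [hj, sub_self, abs_zero, inv_zero]
    exact (inv_pos.2 (minGap_pos h)).le
  refine inv_anti₀ (minGap_pos h) (csInf_le (gapSet_finite x a b).bddBelow ⟨j, ?_⟩)
  rcases hτ with rfl | rfl
  exacts [Or.inl ⟨hj, rfl⟩, Or.inr ⟨hj, rfl⟩]

end minGap

lemma abs_average_sub_card_filter_le {m : ℕ} (hm : m ≠ 0) (p : Fin m → Prop)
    [DecidablePred p] (x y z : Fin m → ℝ) {B : ℝ}
    (h : ∀ i, |(if p i then 1 else 0) - x i + (y i + z i) / 2| ≤ B) :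
    |1 - 1 / (m : ℝ) * ∑ i, x i + 1 / (2 * (m : ℝ)) * ∑ i, (y i + z i)
        - 1 / (m : ℝ) * (Finset.univ.filter fun i => ¬ p i).card| ≤ B := by
  have hcompl : ∀ i, (if ¬ p i then (1 : ℝ) else 0) = 1 - if p i then 1 else 0 := fun i => by
    split_ifs <;> simp_all
  have havg : 1 - 1 / (m : ℝ) * ∑ i, x i + 1 / (2 * (m : ℝ)) * ∑ i, (y i + z i)
      - 1 / (m : ℝ) * (Finset.univ.filter fun i => ¬ p i).card
      = (∑ i, ((if p i then 1 else 0) - x i + (y i + z i) / 2)) / m := by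
    rw [Finset.card_filter]
    push_cast
    simp only [hcompl, Finset.sum_add_distrib, Finset.sum_sub_distrib, ← Finset.sum_div,
      Finset.sum_const, Finset.card_univ, Fintype.card_fin, nsmul_eq_mul, mul_one]
    field_simp
    ring
  rw [havg, abs_div, Nat.abs_cast, div_le_iff₀ (by positivity)]
  calc _ ≤ ∑ i, |(if p i then 1 else 0) - x i + (y i + z i) / 2| :=
        Finset.abs_sum_le_sum_abs _ _
    _ ≤ ∑ _i : Fin m, B := Finset.sum_le_sum fun i _ => h i
    _ = B * m := by simp [mul_comm]

theorem oracle_speed_bounded_null_general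
    (σ : ℝ) (hσ : 0 < σ) (a b : ℝ) (hab : a < b)
    (ω : ℝ → ℝ) (hω_nonneg : ∀ s, 0 ≤ ω s)
    (hω_bdd : ∃ C : ℝ, ∀ s, ω s ≤ C)
    (hω_int : (∫ s in (-1:ℝ)..1, ω s) = 1)
    (hω_BV : BoundedVariationOn ω (Set.Icc (-1) 1))
    (m : ℕ) (hm : 0 < m) (μs : Fin m → ℝ)
    (ψ₁ : ℝ → ℝ → ℝ)
    (hψ₁ : ∀ t μ, ψ₁ t μ = (1 / π) * ∫ y in ((μ - b) * t)..((μ - a) * t), Real.sin y / y)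
    (ψt : ℝ → ℝ → ℝ → ℝ)
    (hψt : ∀ t μ μ', ψt t μ μ' = ∫ s in (-1:ℝ)..1, ω s * Real.cos (t * s * σ⁻¹ * (μ - μ')))
    (φm : ℝ → ℝ)
    (hφm : ∀ t, φm t = 1 - (1 / (m : ℝ)) * ∑ i, ψ₁ t (μs i) +
      (1 / (2 * (m : ℝ))) * ∑ i, (ψt t (μs i) a + ψt t (μs i) b))
    (π1 : ℝ)
    (hπ1 : π1 = (1 / (m : ℝ)) *
      ((Finset.univ.filter (fun i => μs i ∉ Set.Ioo a b)).card : ℝ))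
    (hπ1pos : 0 < π1)
    (hexa : ∃ j, μs j ≠ a)
    (um : ℝ)
    (hum : um = sInf {r : ℝ | ∃ j,
      (μs j ≠ a ∧ r = |μs j - a|) ∨ (μs j ≠ b ∧ r = |μs j - b|)})
    (t : ℝ) (ht : 0 < t) :
    |π1⁻¹ * φm t - 1| ≤
      (4 * σ * ((eVariationOn ω (Set.Icc (-1) 1)).toReal + ⨆ s : ℝ, |ω s|) + 12) /
          (π1 * um * t) +
        4 / ((b - a) * t * π1) := by
  obtain rfl : ψ₁ = psiOne a b := funext₂ hψ₁
  obtain rfl : ψt = psiTilde ω σ := funext₃ hψt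
  change um = minGap μs a b at hum
  set K := 4 * σ * ((eVariationOn ω (Set.Icc (-1) 1)).toReal + ⨆ s : ℝ, |ω s|)
  have hum_pos : 0 < um := hum ▸ minGap_pos hexa
  have hgap : ∀ i τ, τ = a ∨ τ = b → |μs i - τ|⁻¹ ≤ um⁻¹ :=
    fun i τ hτ => hum ▸ inv_abs_sub_le_inv_minGap hexa i hτ
  have hK : 0 ≤ (eVariationOn ω (Set.Icc (-1) 1)).toReal + ⨆ s : ℝ, |ω s| :=
    add_nonneg ENNReal.toReal_nonneg (Real.iSup_nonneg fun s => abs_nonneg _)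
  have hterm : ∀ i, |(if μs i ∈ Ioo a b then 1 else 0) - psiOne a b t (μs i)
      + (psiTilde ω σ t (μs i) a + psiTilde ω σ t (μs i) b) / 2|
        ≤ (K + 2 * π⁻¹) / (um * t) := fun i => by
    grw [abs_indicator_sub_psiOne_add_psiTilde_le hω_nonneg hω_bdd hω_int hω_BV hσ hab ht,
      hgap i a (Or.inl rfl), hgap i b (Or.inr rfl)]
    exact le_of_eq (by field_simp; ring)
  have hdev : |φm t - π1| ≤ (K + 12) / (um * t) := by
    rw [hφm, hπ1]
    refine (abs_average_sub_card_filter_le hm.ne' (fun i => μs i ∈ Ioo a b) _ _ _ hterm).trans ?_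
    gcongr
    linarith [inv_le_one_of_one_le₀ (by linarith [pi_gt_three] : (1 : ℝ) ≤ π)]
  have hba : 0 < (b - a) * t * π1 := by have := sub_pos.2 hab; positivity
  calc |π1⁻¹ * φm t - 1| = π1⁻¹ * |φm t - π1| := by
        rw [← abs_of_pos (inv_pos.2 hπ1pos), ← abs_mul, abs_of_pos (inv_pos.2 hπ1pos),
          mul_sub, inv_mul_cancel₀ hπ1pos.ne']
    _ ≤ π1⁻¹ * ((K + 12) / (um * t)) := by gcongr
    _ = (K + 12) / (π1 * um * t) := by field_simp
    _ ≤ _ := le_add_of_nonneg_right (div_nonneg zero_le_four hba.le)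

/-- Speed of convergence of the average discriminant function `φ_m(t, μ)` to the alternative
proportion `π_{1,m}` for the bounded null `(a, b)`: for `t > 0` with `t(b−a) ≥ 2` and
`t u_m ≥ 2`,
`|π_{1,m}⁻¹ φ_m(t, μ) − 1| ≤ (4σ(‖ω‖_TV + ‖ω‖_∞) + 12)/(π_{1,m} u_m t) + 4/((b−a) t π_{1,m})`. -/
theorem oracle_speed_bounded_null
    (σ : ℝ) (hσ : 0 < σ) (a b : ℝ) (hab : a < b)
    (ω : ℝ → ℝ) (hω_meas : Measurable ω) (hω_nonneg : ∀ s, 0 ≤ ω s)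
    (hω_even : ∀ s, ω (-s) = ω s)
    (hω_bdd : ∃ C : ℝ, ∀ s, ω s ≤ C)
    (hω_supp : ∀ s : ℝ, s ∉ Set.Icc (-1:ℝ) 1 → ω s = 0)
    (hω_int : (∫ s in (-1:ℝ)..1, ω s) = 1)
    (hω_BV : BoundedVariationOn ω (Set.Icc (-1) 1))
    (m : ℕ) (hm : 0 < m) (μs : Fin m → ℝ)
    (ψ₁ : ℝ → ℝ → ℝ)
    (hψ₁ : ∀ t μ, ψ₁ t μ = (1 / π) * ∫ y in ((μ - b) * t)..((μ - a) * t), Real.sin y / y)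
    (ψt : ℝ → ℝ → ℝ → ℝ)
    (hψt : ∀ t μ μ', ψt t μ μ' = ∫ s in (-1:ℝ)..1, ω s * Real.cos (t * s * σ⁻¹ * (μ - μ')))
    (φm : ℝ → ℝ)
    (hφm : ∀ t, φm t = 1 - (1 / (m : ℝ)) * ∑ i, ψ₁ t (μs i) +
      (1 / (2 * (m : ℝ))) * ∑ i, (ψt t (μs i) a + ψt t (μs i) b))
    (π1 : ℝ)
    (hπ1 : π1 = (1 / (m : ℝ)) *
      ((Finset.univ.filter (fun i => μs i ∉ Set.Ioo a b)).card : ℝ))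
    (hπ1pos : 0 < π1)
    (hexa : ∃ j, μs j ≠ a) (hexb : ∃ j, μs j ≠ b)
    (um : ℝ)
    (hum : um = sInf {r : ℝ | ∃ j,
      (μs j ≠ a ∧ r = |μs j - a|) ∨ (μs j ≠ b ∧ r = |μs j - b|)})
    (t : ℝ) (ht : 0 < t) (htab : 2 ≤ t * (b - a)) (htu : 2 ≤ t * um) :
    |π1⁻¹ * φm t - 1| ≤
      (4 * σ * ((eVariationOn ω (Set.Icc (-1) 1)).toReal + ⨆ s : ℝ, |ω s|) + 12) /
          (π1 * um * t) +
        4 / ((b - a) * t * π1) :=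
  oracle_speed_bounded_null_general σ hσ a b hab ω hω_nonneg hω_bdd hω_int hω_BV m hm μs ψ₁ hψ₁ ψt
    hψt φm hφm π1 hπ1 hπ1pos hexa um hum t ht
end
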